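/- arXiv:1808.09117 — 10 statements merged into one kernel-verified Lean document; each statement's English description precedes it below -/
import Mathlib

section
/- Let G be a connected cograph (P4-free graph) and S a minimal vertex separator of G. Then for every edge {u,v} contained in a connected component of G \ S, the neighborhoods of u and v restricted to S coincide: N_G(u) ∩ S = N_G(v) ∩ S. -/
open SimpleGraph

variable {V : Type*}

/-- A graph is a cograph iff it has no induced path on four vertices. -/
def IsP4Free (G : SimpleGraph V) : Prop :=
  ∀ a b c d : V, a ≠ b → a ≠ c → a ≠ d → b ≠ c → b ≠ d → c ≠ d →
    ¬(G.Adj a b ∧ G.Adj b c ∧ G.Adj c d ∧ ¬G.Adj a c ∧ ¬G.Adj a d ∧ ¬G.Adj b d)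

/-- `S` is a vertex separator of `G`: removing `S` leaves a nonempty disconnected graph. -/
def IsVertexSeparator (G : SimpleGraph V) (S : Set V) : Prop :=
  Sᶜ.Nonempty ∧ ¬(G.induce Sᶜ).Connected

/-- `S` is a minimal vertex separator: no proper subset of `S` is a separator. -/
def IsMinimalVertexSeparator (G : SimpleGraph V) (S : Set V) : Prop :=
  IsVertexSeparator G S ∧ ∀ S' : Set V, S' ⊂ S → ¬IsVertexSeparator G S'

lemma key_lemma (G : SimpleGraph V) (hP4 : IsP4Free G)
    (S : Set V) (hS : IsMinimalVertexSeparator G S)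
    (u v : V) (hu : u ∉ S) (hv : v ∉ S) (huv : G.Adj u v)
    (x : V) (hx : x ∈ S) (hux : G.Adj u x) : G.Adj v x := by
  by_contra hvx
  have hu' : u ∈ Sᶜ := hu
  have hv' : v ∈ Sᶜ := hv
  -- S \ {x} is not a separator, so G.induce (S\{x})ᶜ is connected
  have hns : ¬IsVertexSeparator G (S \ {x}) :=
    hS.2 (S \ {x}) (Set.sdiff_singleton_ssubset.mpr hx)
  have hne : (S \ {x})ᶜ.Nonempty :=
    hS.1.1.mono (Set.compl_subset_compl.mpr Set.diff_subset)
  have hconn' : (G.induce (S \ {x})ᶜ).Connected := by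
    by_contra hc
    exact hns ⟨hne, hc⟩
  -- get a vertex z not reachable from u in G.induce Sᶜ
  have hdis : ¬(G.induce Sᶜ).Connected := hS.1.2
  have hnep : Nonempty ↥(Sᶜ) := hS.1.1.to_subtype
  obtain ⟨a, b, hab⟩ : ∃ a b : ↥(Sᶜ), ¬(G.induce Sᶜ).Reachable a b := by
    by_contra h
    push_neg at h
    haveI := hnep
    exact hdis ⟨fun p q => h p q⟩
  obtain ⟨z, hz⟩ : ∃ z : ↥(Sᶜ), ¬(G.induce Sᶜ).Reachable ⟨u, hu'⟩ z := by
    by_cases h : (G.induce Sᶜ).Reachable ⟨u, hu'⟩ a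
    · exact ⟨b, fun hb => hab (h.symm.trans hb)⟩
    · exact ⟨a, h⟩
  -- membership in (S\{x})ᶜ
  have memT' : ∀ y : V, y ∈ Sᶜ → y ∈ (S \ {x})ᶜ := by
    intro y hy
    simp only [Set.mem_compl_iff, Set.mem_diff, Set.mem_singleton_iff] at hy ⊢
    tauto
  -- there exists a neighbor w of x in Sᶜ not reachable from u in G.induce Sᶜ
  obtain ⟨w, hxw, hnw⟩ :
      ∃ w : ↥(Sᶜ), G.Adj x ↑w ∧ ¬(G.induce Sᶜ).Reachable ⟨u, hu'⟩ w := by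
    by_contra hcon
    push_neg at hcon
    -- every vertex reachable from u in G.induce (S\{x})ᶜ is either x or reachable in Sᶜ
    set R : V → Prop := fun c => c = x ∨
      ∃ hc : c ∈ Sᶜ, (G.induce Sᶜ).Reachable ⟨u, hu'⟩ ⟨c, hc⟩ with hR
    have step : ∀ c d : ↥((S \ {x})ᶜ), (G.induce (S \ {x})ᶜ).Adj c d → R ↑c → R ↑d := by
      rintro ⟨c, hcm⟩ ⟨d, hdm⟩ hcd hRc
      have hcd' : G.Adj c d := hcd
      have hdmem : (d : V) ≠ x → d ∈ Sᶜ := by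
        intro hdx
        simp only [Set.mem_compl_iff, Set.mem_diff, Set.mem_singleton_iff] at hdm ⊢
        tauto
      rcases hRc with hcx | ⟨hc, hreach⟩
      · -- c = x, so d is a neighbor of x
        have hcx' : c = x := hcx
        rw [hcx'] at hcd'
        have hdx : (d : V) ≠ x := hcd'.ne'
        have hd : d ∈ Sᶜ := hdmem hdx
        exact Or.inr ⟨hd, hcon ⟨d, hd⟩ hcd'⟩
      · by_cases hdx : (d : V) = x
        · exact Or.inl hdx
        · have hd : d ∈ Sᶜ := hdmem hdx
          have hadj : (G.induce Sᶜ).Adj ⟨c, hc⟩ ⟨d, hd⟩ := hcd'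
          exact Or.inr ⟨hd, hreach.trans hadj.reachable⟩
    have main : ∀ (p q : ↥((S \ {x})ᶜ)) (_ : (G.induce (S \ {x})ᶜ).Walk p q),
        R ↑p → R ↑q := by
      intro p q wk
      induction wk with
      | nil => exact id
      | cons h _ ih => exact fun hp => ih (step _ _ h hp)
    have hwalk := hconn'.preconnected ⟨u, memT' u hu'⟩ ⟨z, memT' z z.2⟩
    obtain ⟨wk⟩ := hwalk
    have hRu : R u := Or.inr ⟨hu', SimpleGraph.Reachable.refl _⟩
    have hRz : R ↑z := main _ _ wk hRu
    rcases hRz with hzx | ⟨hzc, hzr⟩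
    · exact z.2 (hzx ▸ hx)
    · exact hz (by convert hzr)
  -- now build the induced P4: w - x - u - v
  have hw : (w : V) ∉ S := w.2
  have hreach_uv : (G.induce Sᶜ).Reachable ⟨u, hu'⟩ ⟨v, hv'⟩ := by
    have : (G.induce Sᶜ).Adj ⟨u, hu'⟩ ⟨v, hv'⟩ := huv
    exact this.reachable
  have hwu : ¬G.Adj ↑w u := by
    intro h
    have : (G.induce Sᶜ).Adj ⟨u, hu'⟩ w := h.symm
    exact hnw this.reachable
  have hwv : ¬G.Adj ↑w v := by
    intro h
    have : (G.induce Sᶜ).Adj ⟨v, hv'⟩ w := h.symm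
    exact hnw (hreach_uv.trans this.reachable)
  have hwx : (w : V) ≠ x := fun h => hw (h ▸ hx)
  have hwu' : (w : V) ≠ u := by
    intro h
    exact hnw (by rw [show w = (⟨u, hu'⟩ : ↥(Sᶜ)) from Subtype.ext h])
  have hwv' : (w : V) ≠ v := by
    intro h
    exact hnw (by rw [show w = (⟨v, hv'⟩ : ↥(Sᶜ)) from Subtype.ext h]; exact hreach_uv)
  have hxu : x ≠ u := fun h => hu (h ▸ hx)
  have hxv : x ≠ v := fun h => hv (h ▸ hx)
  exact hP4 ↑w x u v hwx hwu' hwv' hxu hxv huv.ne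
    ⟨hxw.symm, hux.symm, huv, hwu, hwv, fun h => hvx h.symm⟩

/-- For a minimal vertex separator `S` of a connected cograph and any edge `{u,v}`
of `G \ S` (which lies inside one connected component of `G \ S`),
`N_G(u) ∩ S = N_G(v) ∩ S`. -/
theorem stmt_0 (G : SimpleGraph V) (hconn : G.Connected) (hP4 : IsP4Free G)
    (S : Set V) (hS : IsMinimalVertexSeparator G S)
    (u v : V) (hu : u ∉ S) (hv : v ∉ S) (huv : G.Adj u v) :
    ∀ x ∈ S, (G.Adj u x ↔ G.Adj v x) := by
  intro x hx
  exact ⟨fun h => key_lemma G hP4 S hS u v hu hv huv x hx h,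
         fun h => key_lemma G hP4 S hS v u hv hu huv.symm x hx h⟩
end

section
/- Let G be a connected cograph and S a minimal vertex separator of G. Then every vertex x ∈ S is adjacent to every vertex of V(G) \ S. -/
open SimpleGraph

variable {V : Type*}

/-- From a walk to `t` inside `T`, starting at `v ≠ t`, extract a neighbor `q` of `t`
reachable from `v` within `U ⊇ T \ {t}`. -/
lemma lemA (G : SimpleGraph V) {T U : Set V} :
    ∀ (v t : T) (w : (G.induce T).Walk v t)
      (hU : ∀ y ∈ T, y ≠ (t : V) → y ∈ U) (hvt : (v : V) ≠ (t : V)),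
    ∃ (q : V) (hq : q ∈ U), G.Adj q t ∧
      (G.induce U).Reachable ⟨(v : V), hU _ v.2 hvt⟩ ⟨q, hq⟩ := by
  intro v t w
  induction w with
  | nil => intro hU hvt; exact absurd rfl hvt
  | @cons a b c h w ih =>
    intro hU hvt
    by_cases hb : (b : V) = (c : V)
    · refine ⟨a, hU _ a.2 hvt, ?_, Reachable.refl _⟩
      have h' : G.Adj (a : V) (b : V) := h
      rwa [hb] at h'
    · obtain ⟨q, hq, hadj, hreach⟩ := ih hU hb
      refine ⟨q, hq, hadj, Reachable.trans ?_ hreach⟩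
      exact Adj.reachable (show (G.induce U).Adj ⟨(a : V), hU _ a.2 hvt⟩ ⟨(b : V), hU _ b.2 hb⟩ from h)

/-- Along a walk in `G.induce S'` from `v` (not adjacent to `x`) to `q` (adjacent to `x`),
there are consecutive vertices `p, p'` with `p` not adjacent and `p'` adjacent to `x`. -/
lemma lemB (G : SimpleGraph V) {S' : Set V} (x : V) :
    ∀ (v q : S') (w : (G.induce S').Walk v q)
      (hv : ¬G.Adj (v : V) x) (hq : G.Adj (q : V) x),
    ∃ p p' : S', G.Adj (p : V) (p' : V) ∧ ¬G.Adj (p : V) x ∧ G.Adj (p' : V) x ∧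
      (G.induce S').Reachable v p ∧ (G.induce S').Reachable v p' := by
  intro v q w
  induction w with
  | nil => intro hv hq; exact absurd hq hv
  | @cons a b c h w ih =>
    intro hv hq
    by_cases hb : G.Adj (b : V) x
    · exact ⟨a, b, h, hv, hb, Reachable.refl _, (Adj.reachable h)⟩
    · obtain ⟨p, p', h1, h2, h3, h4, h5⟩ := ih hb hq
      exact ⟨p, p', h1, h2, h3, (Adj.reachable h).trans h4, (Adj.reachable h).trans h5⟩

/-- Every vertex of a minimal vertex separator of a connected cograph is adjacent to
every vertex outside the separator. -/
theorem stmt_1 (G : SimpleGraph V) (hconn : G.Connected) (hP4 : IsP4Free G)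
    (S : Set V) (hS : IsMinimalVertexSeparator G S) :
    ∀ x ∈ S, ∀ v, v ∉ S → G.Adj x v := by
  obtain ⟨⟨hne, hdisc⟩, hmin⟩ := hS
  intro x hxS v hvS
  by_contra hadj
  have hvS' : v ∈ Sᶜ := hvS
  have hne' : Nonempty ↥(Sᶜ) := hne.to_subtype
  have hpre : ¬(G.induce Sᶜ).Preconnected := fun h => hdisc ((connected_iff _).mpr ⟨h, hne'⟩)
  obtain ⟨a, b, hab⟩ : ∃ a b : ↥(Sᶜ), ¬(G.induce Sᶜ).Reachable a b := by
    by_contra hc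
    push_neg at hc
    exact hpre hc
  have hvx : v ≠ x := fun h => hvS (h ▸ hxS)
  obtain ⟨u, hvu⟩ : ∃ u : ↥(Sᶜ), ¬(G.induce Sᶜ).Reachable ⟨v, hvS'⟩ u := by
    by_cases hva : (G.induce Sᶜ).Reachable ⟨v, hvS'⟩ a
    · exact ⟨b, fun h => hab (hva.symm.trans h)⟩
    · exact ⟨a, hva⟩
  have hss : S \ {x} ⊂ S := by
    constructor
    · exact Set.diff_subset
    · intro hsub
      exact (hsub hxS).2 rfl
  have hT : (G.induce (S \ {x})ᶜ).Connected := by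
    by_contra hc
    exact hmin _ hss ⟨hne.mono (Set.compl_subset_compl.mpr Set.diff_subset), hc⟩
  have hxT : x ∈ (S \ {x})ᶜ := fun h => h.2 rfl
  have hvT : v ∈ (S \ {x})ᶜ := fun h => hvS h.1
  have huT : (u : V) ∈ (S \ {x})ᶜ := fun h => u.2 h.1
  have hU : ∀ y ∈ (S \ {x})ᶜ, y ≠ x → y ∈ Sᶜ := fun y hy hyx hyS => hy ⟨hyS, hyx⟩
  have hux : (u : V) ≠ x := fun h => u.2 (h ▸ hxS)
  obtain ⟨w1⟩ := hT.preconnected ⟨v, hvT⟩ ⟨x, hxT⟩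
  obtain ⟨q, hqS, hqadj, hreach1⟩ := lemA G ⟨v, hvT⟩ ⟨x, hxT⟩ w1 hU hvx
  obtain ⟨w2⟩ := hT.preconnected ⟨u, huT⟩ ⟨x, hxT⟩
  obtain ⟨a', ha'S, ha'adj, hreach2⟩ := lemA G ⟨u, huT⟩ ⟨x, hxT⟩ w2 hU hux
  obtain ⟨w3⟩ := hreach1
  obtain ⟨p, p', hpp', hpx, hp'x, hrp, hrp'⟩ :=
    lemB G x _ _ w3 (fun h => hadj h.symm) hqadj
  have hreach2' : (G.induce Sᶜ).Reachable u ⟨a', ha'S⟩ := hreach2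
  have hrp2 : (G.induce Sᶜ).Reachable ⟨v, hvS'⟩ p := hrp
  have hrp'2 : (G.induce Sᶜ).Reachable ⟨v, hvS'⟩ p' := hrp'
  have hna : ∀ z : ↥(Sᶜ), (G.induce Sᶜ).Reachable ⟨v, hvS'⟩ z → ¬G.Adj (z : V) a' := by
    intro z hz hadj'
    have hadj'' : (G.induce Sᶜ).Adj z ⟨a', ha'S⟩ := hadj'
    exact hvu ((hz.trans hadj''.reachable).trans hreach2'.symm)
  have hnear : ∀ z : ↥(Sᶜ), (G.induce Sᶜ).Reachable ⟨v, hvS'⟩ z → (z : V) ≠ a' := by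
    intro z hz h
    have hz' : z = (⟨a', ha'S⟩ : ↥(Sᶜ)) := Subtype.ext h
    exact hvu ((hz' ▸ hz).trans hreach2'.symm)
  exact hP4 (p : V) (p' : V) x a'
    hpp'.ne
    (fun h => p.2 (by rw [h]; exact hxS))
    (hnear p hrp2)
    (fun h => p'.2 (by rw [h]; exact hxS))
    (hnear p' hrp'2)
    (fun h => ha'S (by rw [← h]; exact hxS))
    ⟨hpp', hp'x, ha'adj.symm, hpx, hna p hrp2, hna p' hrp'2⟩
end

section
/- Let G be a connected cograph and S a minimal vertex separator of G. Then every vertex v ∈ V(G) \ S is adjacent to every vertex of S. -/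
open SimpleGraph

variable {V : Type*}

lemma my_walk_aux (G : SimpleGraph V) (S : Set V) (x : V)
    {T : Set V} (hT : ∀ y : V, y ∈ T → y ∈ Sᶜ ∨ y = x)
    {p q : ↑T} (w : (G.induce T).Walk p q) (hp : (p : V) ∈ Sᶜ) :
    (∃ u : ↑Sᶜ, (G.induce Sᶜ).Reachable ⟨p, hp⟩ u ∧ G.Adj ↑u x) ∨
    (∃ hq : (q : V) ∈ Sᶜ, (G.induce Sᶜ).Reachable ⟨p, hp⟩ ⟨q, hq⟩) := by
  induction w with
  | nil => exact Or.inr ⟨hp, Reachable.refl _⟩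
  | @cons a b c h w ih =>
    rcases hT b b.2 with hb | hb
    · have hadj : (G.induce Sᶜ).Adj ⟨a, hp⟩ ⟨b, hb⟩ := h
      rcases ih hb with ⟨u, hru, hux⟩ | ⟨hq, hr⟩
      · exact Or.inl ⟨u, hadj.reachable.trans hru, hux⟩
      · exact Or.inr ⟨hq, hadj.reachable.trans hr⟩
    · refine Or.inl ⟨⟨a, hp⟩, Reachable.refl _, ?_⟩
      have : G.Adj ↑a ↑b := h
      rwa [hb] at this

lemma my_flip_aux (G : SimpleGraph V) (S : Set V) (x : V)
    {p q : ↑Sᶜ} (w : (G.induce Sᶜ).Walk p q) (hp : ¬ G.Adj ↑p x) (hq : G.Adj ↑q x) :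
    ∃ t u : ↑Sᶜ, (G.induce Sᶜ).Reachable p t ∧ G.Adj ↑t ↑u ∧ ¬G.Adj ↑t x ∧ G.Adj ↑u x := by
  induction w with
  | nil => exact absurd hq hp
  | @cons a b c h w ih =>
    by_cases hb : G.Adj ↑b x
    · exact ⟨a, b, Reachable.refl _, h, hp, hb⟩
    · obtain ⟨t, u, hr, h1, h2, h3⟩ := ih hb hq
      exact ⟨t, u, (Adj.reachable h).trans hr, h1, h2, h3⟩

/-- Every vertex outside a minimal vertex separator of a connected cograph is adjacent to
every vertex of the separator. -/
theorem stmt_2 (G : SimpleGraph V) (hconn : G.Connected) (hP4 : IsP4Free G)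
    (S : Set V) (hS : IsMinimalVertexSeparator G S) :
    ∀ v, v ∉ S → ∀ x ∈ S, G.Adj v x := by
  intro v hv x hxS
  by_contra hvx
  obtain ⟨⟨hne, hdisc⟩, hmin⟩ := hS
  have hvS : v ∈ Sᶜ := hv
  -- S \ {x} is not a separator, so removing it leaves a connected graph
  have hsub : S \ {x} ⊂ S := Set.sdiff_singleton_ssubset.mpr hxS
  have hT : ∀ y : V, y ∈ (S \ {x})ᶜ → y ∈ Sᶜ ∨ y = x := by
    intro y hy
    by_cases hyx : y = x
    · exact Or.inr hyx
    · left; intro hyS; exact hy ⟨hyS, hyx⟩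
  have hvT : v ∈ (S \ {x})ᶜ := fun h => hv h.1
  have hconn' : (G.induce (S \ {x})ᶜ).Connected := by
    by_contra hc
    exact hmin _ hsub ⟨⟨v, hvT⟩, hc⟩
  -- two vertices of Sᶜ not reachable in G.induce Sᶜ
  have hpre : ¬ (G.induce Sᶜ).Preconnected := by
    intro hpre
    exact hdisc ((connected_iff _).mpr ⟨hpre, ⟨⟨v, hvS⟩⟩⟩)
  unfold SimpleGraph.Preconnected at hpre
  push_neg at hpre
  obtain ⟨a, b, hab⟩ := hpre
  -- pick w not reachable from v
  obtain ⟨w, hnvw⟩ : ∃ w : ↑Sᶜ, ¬ (G.induce Sᶜ).Reachable ⟨v, hvS⟩ w := by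
    by_cases hva : (G.induce Sᶜ).Reachable ⟨v, hvS⟩ a
    · exact ⟨b, fun hvb => hab (hva.symm.trans hvb)⟩
    · exact ⟨a, hva⟩
  have hwT : (w : V) ∈ (S \ {x})ᶜ := fun h => w.2 h.1
  -- from v to w in the bigger graph
  obtain ⟨u₁, hru₁, hu₁x⟩ :
      ∃ u : ↑Sᶜ, (G.induce Sᶜ).Reachable ⟨v, hvS⟩ u ∧ G.Adj ↑u x := by
    obtain ⟨wk⟩ := hconn' ⟨v, hvT⟩ ⟨w, hwT⟩
    rcases my_walk_aux G S x hT wk hvS with h | ⟨hq, hr⟩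
    · exact h
    · exact absurd hr hnvw
  obtain ⟨u₂, hru₂, hu₂x⟩ :
      ∃ u : ↑Sᶜ, (G.induce Sᶜ).Reachable w u ∧ G.Adj ↑u x := by
    obtain ⟨wk⟩ := hconn' ⟨w, hwT⟩ ⟨v, hvT⟩
    rcases my_walk_aux G S x hT wk w.2 with h | ⟨hq, hr⟩
    · exact h
    · exact absurd hr.symm hnvw
  -- separation fact: nothing reachable from v is equal or adjacent to something reachable from w
  have hsep : ∀ z z' : ↑Sᶜ, (G.induce Sᶜ).Reachable ⟨v, hvS⟩ z →
      (G.induce Sᶜ).Reachable w z' → (z : V) ≠ ↑z' ∧ ¬ G.Adj ↑z ↑z' := by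
    intro z z' hz hz'
    constructor
    · intro he
      exact hnvw (hz.trans (by rw [Subtype.ext he]; exact hz'.symm))
    · intro hadj
      have : (G.induce Sᶜ).Adj z z' := hadj
      exact hnvw (hz.trans (this.reachable.trans hz'.symm))
  -- find the flip pair along a walk from v to u₁
  obtain ⟨wk⟩ := hru₁
  obtain ⟨t, u, hrt, htu, htx, hux⟩ := my_flip_aux G S x wk hvx hu₁x
  have hru : (G.induce Sᶜ).Reachable ⟨v, hvS⟩ u := by
    have : (G.induce Sᶜ).Adj t u := htu
    exact hrt.trans this.reachable
  obtain ⟨htne₂, htnadj₂⟩ := hsep t u₂ hrt hru₂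
  obtain ⟨hune₂, hunadj₂⟩ := hsep u u₂ hru hru₂
  refine hP4 ↑t ↑u x ↑u₂ htu.ne ?_ htne₂ ?_ hune₂ ?_ ⟨htu, hux, hu₂x.symm, htx, htnadj₂, hunadj₂⟩
  · exact fun h => t.2 (h ▸ hxS)
  · exact fun h => u.2 (h ▸ hxS)
  · exact fun h => u₂.2 (h.symm ▸ hxS)
end

section
/- Let G be a connected cograph and S a minimal vertex separator of G. Then for every edge {u,v} in G \ S and every vertex w ∈ S, at least one of {u,w}, {v,w} is an edge of G (in fact both are). -/
/-!
By minimality, `S \ {w}` is no longer a separator, so every component of `G - S` contains a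
neighbour of `w`. Take neighbours `a` and `b` of `w` in two different components. If `w` were
adjacent to `z` but not to a neighbour `z'` of `z` in the component of `a`, then `b - w - z - z'`
would be an induced `P₄`; hence `w` is adjacent to the whole component of `a`. As `a` may be taken
in any component, `w` is adjacent to all of `V \ S`.
-/

open SimpleGraph

variable {V : Type*}

namespace IsP4Free

variable {G : SimpleGraph V}

lemma adj_of_not_adj (hP4 : IsP4Free G) {b w z z' : V} (hbw : G.Adj b w) (hwz : G.Adj w z)
    (hzz' : G.Adj z z') (hbz : ¬G.Adj b z) (hbz' : ¬G.Adj b z') (hb_ne_z : b ≠ z)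
    (hb_ne_z' : b ≠ z') (hw_ne_z' : w ≠ z') : G.Adj w z' := by
  by_contra hwz'
  exact hP4 b w z z' hbw.ne hb_ne_z hb_ne_z' hwz.ne hw_ne_z' hzz'.ne
    ⟨hbw, hwz, hzz', hbz, hbz', hwz'⟩

lemma adj_of_reachable (hP4 : IsP4Free G) {S : Set V} {w : V} (hw : w ∈ S) {b z y : ↥Sᶜ}
    (hwb : G.Adj w b) (hwz : G.Adj w z) (hbz : ¬(G.induce Sᶜ).Reachable b z)
    (hzy : (G.induce Sᶜ).Reachable z y) : G.Adj w y := by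
  obtain ⟨p⟩ := hzy
  induction p with
  | nil => exact hwz
  | @cons z z' y hzz' _ ih =>
    have hbz' : ¬(G.induce Sᶜ).Reachable b z' := fun h => hbz (h.trans hzz'.reachable.symm)
    have not_adj : ∀ {c : ↥Sᶜ}, ¬(G.induce Sᶜ).Reachable b c → ¬G.Adj b c :=
      fun hbc hadj => hbc (comap_adj.mpr hadj).reachable
    have ne : ∀ {c : ↥Sᶜ}, ¬(G.induce Sᶜ).Reachable b c → (b : V) ≠ c :=
      fun hbc h => hbc (Subtype.ext h ▸ Reachable.refl _)
    refine ih (hP4.adj_of_not_adj hwb.symm hwz (comap_adj.mp hzz') (not_adj hbz)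
      (not_adj hbz') (ne hbz) (ne hbz') ?_) hbz'
    rintro rfl
    exact z'.2 hw

end IsP4Free

lemma IsVertexSeparator.exists_not_reachable {G : SimpleGraph V} {S : Set V}
    (hS : IsVertexSeparator G S) (x : ↥Sᶜ) : ∃ y, ¬(G.induce Sᶜ).Reachable x y := by
  by_contra! h
  exact hS.2 (@Connected.mk _ _ (fun p q => (h p).symm.trans (h q)) ⟨x⟩)

namespace IsMinimalVertexSeparator

variable {G : SimpleGraph V} {S : Set V}

/-- A walk avoiding `S \ {w}` between two components of `G - S` must pass through `w`; the vertex
just before its first visit to `w` is a neighbour of `w` in the component of the start. -/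
lemma exists_adj_reachable_of_walk {w : V} {y x : ↥(S \ {w})ᶜ}
    (p : (G.induce (S \ {w})ᶜ).Walk y x) (hy : (y : V) ∉ S) (hx : (x : V) ∉ S)
    (hyx : ¬(G.induce Sᶜ).Reachable ⟨y, hy⟩ ⟨x, hx⟩) :
    ∃ a : ↥Sᶜ, G.Adj w a ∧ (G.induce Sᶜ).Reachable ⟨y, hy⟩ a := by
  induction p with
  | nil => exact absurd (Reachable.refl _) hyx
  | @cons y z x hyz _ ih =>
    have hyz : G.Adj y z := comap_adj.mp hyz
    by_cases hz : (z : V) ∈ S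
    · have hzw : (z : V) = w := by
        by_contra hzw
        exact z.2 ⟨hz, hzw⟩
      replace hyz : G.Adj (y : V) w := by convert hyz using 1; exact hzw.symm
      exact ⟨⟨y, hy⟩, hyz.symm, Reachable.refl _⟩
    · have hyz' : (G.induce Sᶜ).Reachable ⟨y, hy⟩ ⟨z, hz⟩ :=
        (show (G.induce Sᶜ).Adj ⟨y, hy⟩ ⟨z, hz⟩ from comap_adj.mpr hyz).reachable
      obtain ⟨a, hwa, hza⟩ := ih hz hx fun h => hyx (hyz'.trans h)
      exact ⟨a, hwa, hyz'.trans hza⟩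

lemma exists_adj_reachable (hS : IsMinimalVertexSeparator G S) {w : V} (hw : w ∈ S)
    (x : ↥Sᶜ) : ∃ a : ↥Sᶜ, G.Adj w a ∧ (G.induce Sᶜ).Reachable x a := by
  obtain ⟨y, hxy⟩ := hS.1.exists_not_reachable x
  have hsub : S \ {w} ⊂ S := Set.sdiff_singleton_ssubset.mpr hw
  have hconn : (G.induce (S \ {w})ᶜ).Connected := by
    by_contra h
    exact hS.2 _ hsub ⟨⟨x, fun hx => x.2 hx.1⟩, h⟩
  obtain ⟨p⟩ := hconn.preconnected ⟨x, fun hx => x.2 hx.1⟩ ⟨y, fun hy => y.2 hy.1⟩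
  exact exists_adj_reachable_of_walk p x.2 y.2 hxy

lemma adj_of_isP4Free (hS : IsMinimalVertexSeparator G S) (hP4 : IsP4Free G) {w : V}
    (hw : w ∈ S) (x : ↥Sᶜ) : G.Adj w x := by
  obtain ⟨a, hwa, hxa⟩ := hS.exists_adj_reachable hw x
  obtain ⟨y, hay⟩ := hS.1.exists_not_reachable a
  obtain ⟨b, hwb, hyb⟩ := hS.exists_adj_reachable hw y
  exact hP4.adj_of_reachable hw hwb hwa (fun hba => hay (hba.symm.trans hyb.symm)) hxa.symm

end IsMinimalVertexSeparator

theorem stmt_3_general (G : SimpleGraph V) (hP4 : IsP4Free G)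
    (S : Set V) (hS : IsMinimalVertexSeparator G S)
    (u v : V) (hu : u ∉ S) (hv : v ∉ S) :
    ∀ w ∈ S, (G.Adj u w ∨ G.Adj v w) ∧ (G.Adj u w ∧ G.Adj v w) := by
  intro w hw
  have hwu : G.Adj u w := (hS.adj_of_isP4Free hP4 hw ⟨u, hu⟩).symm
  exact ⟨Or.inl hwu, hwu, (hS.adj_of_isP4Free hP4 hw ⟨v, hv⟩).symm⟩

/-- Every edge `{u,v}` of `G \ S` is universal to a minimal vertex separator `S`:
each `w ∈ S` is adjacent to `u` or to `v` (in fact to both). -/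
theorem stmt_3 (G : SimpleGraph V) (hconn : G.Connected) (hP4 : IsP4Free G)
    (S : Set V) (hS : IsMinimalVertexSeparator G S)
    (u v : V) (hu : u ∉ S) (hv : v ∉ S) (huv : G.Adj u v) :
    ∀ w ∈ S, (G.Adj u w ∨ G.Adj v w) ∧ (G.Adj u w ∧ G.Adj v w) :=
  stmt_3_general G hP4 S hS u v hu hv
end

section
/- Let G be a connected cograph that is the join of graphs G_1, ..., G_t (t ≥ 2), where each G_i is disconnected. Then for each i, the set S_i = V(G) \ V(G_i) is a minimal vertex separator of G, and every minimal vertex separator of G is of this form. -/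
open SimpleGraph

variable {V : Type*}

/-- If a connected cograph `G` is the join of graphs `G_1, …, G_t` (`t ≥ 2`, parts given by
the fibers of `f`), each part being disconnected, then each `S_i = V(G) \ V(G_i)` is a
minimal vertex separator, and every minimal vertex separator of `G` is of this form. -/
theorem stmt_4 (G : SimpleGraph V) (hconn : G.Connected) (hP4 : IsP4Free G)
    (t : ℕ) (ht : 2 ≤ t) (f : V → Fin t) (hsurj : Function.Surjective f)
    (hjoin : ∀ u v : V, f u ≠ f v → G.Adj u v)
    (hdisc : ∀ i : Fin t, ¬(G.induce (f ⁻¹' {i})).Connected) :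
    (∀ i : Fin t, IsMinimalVertexSeparator G (f ⁻¹' {i})ᶜ) ∧
    (∀ S : Set V, IsMinimalVertexSeparator G S → ∃ i : Fin t, S = (f ⁻¹' {i})ᶜ) := by
  -- Each S_i is a vertex separator
  have hsep : ∀ i : Fin t, IsVertexSeparator G (f ⁻¹' {i})ᶜ := by
    intro i
    constructor
    · rw [compl_compl]
      obtain ⟨x, hx⟩ := hsurj i
      exact ⟨x, hx⟩
    · rw [compl_compl]
      exact hdisc i
  have hmin1 : ∀ i : Fin t, IsMinimalVertexSeparator G (f ⁻¹' {i})ᶜ := by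
    intro i
    refine ⟨hsep i, ?_⟩
    intro S' hS' hsep'
    obtain ⟨x, hxB, hxS'⟩ := Set.exists_of_ssubset hS'
    have hfx : f x ≠ i := hxB
    have hsub' : f ⁻¹' {i} ⊆ S'ᶜ := by
      intro y hy hyS'
      exact (hS'.subset hyS') hy
    have hx' : x ∈ S'ᶜ := hxS'
    apply hsep'.2
    rw [SimpleGraph.connected_iff]
    have hreach : ∀ u : ↥(S'ᶜ), (G.induce S'ᶜ).Reachable u ⟨x, hx'⟩ := by
      rintro ⟨u, hu⟩
      by_cases h1 : f u = i
      · refine SimpleGraph.Adj.reachable ?_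
        exact hjoin u x (by rw [h1]; exact fun h => hfx h.symm)
      · by_cases h2 : f u = f x
        · obtain ⟨a, ha⟩ := hsurj i
          have haS : a ∈ S'ᶜ := hsub' ha
          refine SimpleGraph.Reachable.trans
            (SimpleGraph.Adj.reachable (v := ⟨a, haS⟩) ?_)
            (SimpleGraph.Adj.reachable ?_)
          · exact hjoin u a (by rw [ha]; exact h1)
          · exact hjoin a x (by rw [ha]; exact fun h => hfx h.symm)
        · exact SimpleGraph.Adj.reachable (hjoin u x h2)
    exact ⟨fun u v => (hreach u).trans (hreach v).symm, ⟨⟨x, hx'⟩⟩⟩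
  refine ⟨hmin1, ?_⟩
  rintro S ⟨⟨hne, hnc⟩, hmin⟩
  have hnp : ¬ (G.induce Sᶜ).Preconnected := by
    intro h
    obtain ⟨x, hx⟩ := hne
    exact hnc ((SimpleGraph.connected_iff _).mpr ⟨h, ⟨⟨x, hx⟩⟩⟩)
  simp only [SimpleGraph.Preconnected] at hnp
  push_neg at hnp
  obtain ⟨u, v, huv⟩ := hnp
  refine ⟨f u.1, ?_⟩
  have hfv : f v.1 = f u.1 := by
    by_contra h
    exact huv (SimpleGraph.Adj.reachable (hjoin u.1 v.1 fun h' => h h'.symm))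
  have hsub : (f ⁻¹' {f u.1})ᶜ ⊆ S := by
    intro w hw
    by_contra hwS
    have hw' : (w : V) ∈ Sᶜ := hwS
    have h1 : G.Adj u.1 w := hjoin _ _ (fun h => hw h.symm)
    have h2 : G.Adj w v.1 := hjoin _ _ (by rw [hfv]; exact hw)
    exact huv ((SimpleGraph.Adj.reachable (v := (⟨w, hw'⟩ : ↥(Sᶜ))) h1).trans
      (SimpleGraph.Adj.reachable h2))
  by_contra h
  exact hmin _ (hsub.ssubset_of_ne (fun he => h he.symm)) (hsep (f u.1))
end

section
/- Let G be a connected cograph. Then any two distinct minimal vertex separators of G have vertex-disjoint complements; equivalently, if S and S' are distinct minimal vertex separators, then V(G) \ S and V(G) \ S' are disjoint. -/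
open SimpleGraph

variable {V : Type*}

/-- Walks inside a vertex set `A`, as a relation on `V`. -/
def ChainIn (G : SimpleGraph V) (A : Set V) : V → V → Prop :=
  Relation.ReflTransGen (fun a b => G.Adj a b ∧ a ∈ A ∧ b ∈ A)

lemma chainIn_symm {G : SimpleGraph V} {A : Set V} {a b : V} (h : ChainIn G A a b) :
    ChainIn G A b a :=
  haveI : Std.Symm (fun a b => G.Adj a b ∧ a ∈ A ∧ b ∈ A) := ⟨fun _ _ h => ⟨h.1.symm, h.2.2, h.2.1⟩⟩
  Std.Symm.symm (r := Relation.ReflTransGen (fun a b => G.Adj a b ∧ a ∈ A ∧ b ∈ A)) _ _ h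

lemma reachable_chainIn {G : SimpleGraph V} {A : Set V} {x y : ↥A}
    (h : (G.induce A).Reachable x y) : ChainIn G A x.val y.val := by
  obtain ⟨w⟩ := h
  induction w with
  | nil => exact Relation.ReflTransGen.refl
  | @cons u c _ h p ih => exact Relation.ReflTransGen.head ⟨h, u.2, c.2⟩ ih

lemma chainIn_reachable {G : SimpleGraph V} {A : Set V} {a b : V}
    (h : ChainIn G A a b) (hb : b ∈ A) :
    ∀ ha : a ∈ A, (G.induce A).Reachable ⟨a, ha⟩ ⟨b, hb⟩ := by
  induction h using Relation.ReflTransGen.head_induction_on with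
  | refl => exact fun _ => Reachable.refl _
  | head h' _ ih =>
    intro ha
    exact (Reachable.trans (Adj.reachable (show (G.induce A).Adj ⟨_, ha⟩ ⟨_, h'.2.2⟩ from h'.1))
      (ih h'.2.2))

lemma exists_adj_chain {G : SimpleGraph V} {S : Set V} {s : V} (hs : s ∈ S) {a b : V}
    (h : ChainIn G (insert s Sᶜ) a b) (hb : b = s) :
    ∀ _ : a ∈ Sᶜ, ∃ c, c ∈ Sᶜ ∧ G.Adj c s ∧ ChainIn G Sᶜ a c := by
  induction h using Relation.ReflTransGen.head_induction_on with
  | refl => exact fun ha => absurd (hb ▸ hs) ha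
  | @head a c h' _ ih =>
    intro ha
    rcases h'.2.2 with hcs | hc
    · exact ⟨a, ha, hcs ▸ h'.1, Relation.ReflTransGen.refl⟩
    · obtain ⟨c', hc', hadj', hchain⟩ := ih hc
      exact ⟨c', hc', hadj', Relation.ReflTransGen.head ⟨h'.1, ha, hc⟩ hchain⟩

lemma exists_P4_pair {G : SimpleGraph V} {S : Set V} {s v y0 : V}
    (h : ChainIn G Sᶜ y0 v) (hv : ¬G.Adj v s) :
    ∀ _ : G.Adj y0 s, ∃ x y, x ∈ Sᶜ ∧ y ∈ Sᶜ ∧ G.Adj y x ∧ G.Adj y s ∧ ¬G.Adj x s ∧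
      ChainIn G Sᶜ v x ∧ ChainIn G Sᶜ v y := by
  induction h using Relation.ReflTransGen.head_induction_on with
  | refl => exact fun hy0 => absurd hy0 hv
  | @head a c h' hcv ih =>
    intro ha
    by_cases hcs : G.Adj c s
    · exact ih hcs
    · refine ⟨c, a, h'.2.2, h'.2.1, h'.1, ha, hcs, chainIn_symm hcv, ?_⟩
      exact Relation.ReflTransGen.tail (chainIn_symm hcv) ⟨h'.1.symm, h'.2.2, h'.2.1⟩

/-- Key lemma: every vertex of a minimal separator is adjacent to every vertex
outside the separator. -/
lemma sep_adj_compl {G : SimpleGraph V} (hP4 : IsP4Free G) {S : Set V}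
    (hS : IsMinimalVertexSeparator G S) {s v : V} (hs : s ∈ S) (hv : v ∈ Sᶜ) :
    G.Adj s v := by
  by_contra hadj
  have hvs : ¬G.Adj v s := fun h => hadj h.symm
  -- removing `S \ {s}` leaves a connected graph
  have hT : ¬IsVertexSeparator G (S \ {s}) := hS.2 _ (Set.sdiff_singleton_ssubset.mpr hs)
  have hAeq : (S \ {s})ᶜ = insert s Sᶜ := by
    ext t; by_cases ht : t = s <;> simp [Set.mem_diff, ht, hs]
  rw [IsVertexSeparator, hAeq, not_and, not_not] at hT
  have hconnT : (G.induce (insert s Sᶜ)).Connected := hT ⟨s, Set.mem_insert _ _⟩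
  -- a vertex `z` in a different component of `G[Sᶜ]` than `v`
  have hnc : ¬(G.induce Sᶜ).Preconnected := fun hp => hS.1.2 ((connected_iff _).mpr ⟨hp, ⟨⟨v, hv⟩⟩⟩)
  have : ∃ u w : ↥(Sᶜ), ¬(G.induce Sᶜ).Reachable u w := by
    by_contra hc
    push_neg at hc
    exact hnc fun u w => hc u w
  obtain ⟨u, w, huw⟩ := this
  obtain ⟨z, hz⟩ : ∃ z : ↥(Sᶜ), ¬(G.induce Sᶜ).Reachable ⟨v, hv⟩ z := by
    by_cases hr : (G.induce Sᶜ).Reachable ⟨v, hv⟩ u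
    · exact ⟨w, fun h => huw (hr.symm.trans h)⟩
    · exact ⟨u, hr⟩
  -- a neighbor `y0` of `s` connected to `v` within `Sᶜ`
  have chain1 : ChainIn G (insert s Sᶜ) v s :=
    reachable_chainIn (hconnT.preconnected ⟨v, Or.inr hv⟩ ⟨s, Or.inl rfl⟩)
  obtain ⟨y0, hy0m, hy0adj, hchain_v_y0⟩ := exists_adj_chain hs chain1 rfl hv
  -- a neighbor `b` of `s` connected to `z` within `Sᶜ`
  have chain2 : ChainIn G (insert s Sᶜ) z.val s :=
    reachable_chainIn (hconnT.preconnected ⟨z.val, Or.inr z.2⟩ ⟨s, Or.inl rfl⟩)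
  obtain ⟨b, hbm, hbadj, hchain_z_b⟩ := exists_adj_chain hs chain2 rfl z.2
  -- the P4 pair `x, y`
  obtain ⟨x, y, hxm, hym, hyx, hys, hxs, hvx, hvy⟩ :=
    exists_P4_pair (chainIn_symm hchain_v_y0) hvs hy0adj
  have hvb_imp : ¬ChainIn G Sᶜ v b := fun h =>
    hz (chainIn_reachable (Relation.ReflTransGen.trans h (chainIn_symm hchain_z_b)) z.2 hv)
  have hxb : ¬G.Adj x b := fun h =>
    hvb_imp (Relation.ReflTransGen.tail hvx ⟨h, hxm, hbm⟩)
  have hyb : ¬G.Adj y b := fun h =>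
    hvb_imp (Relation.ReflTransGen.tail hvy ⟨h, hym, hbm⟩)
  exact hP4 x y s b hyx.symm.ne (fun h => hxm (h ▸ hs)) (fun h => hvb_imp (h ▸ hvx))
    (fun h => hym (h ▸ hs)) (fun h => hvb_imp (h ▸ hvy)) (fun h => hbm (h ▸ hs))
    ⟨hyx.symm, hys, hbadj.symm, hxs, hxb, hyb⟩

lemma compl_subset_compl_aux {G : SimpleGraph V} (hP4 : IsP4Free G) {S S' : Set V}
    (hS : IsMinimalVertexSeparator G S) (hS' : IsMinimalVertexSeparator G S')
    {v : V} (hv : v ∈ Sᶜ) (hv' : v ∈ S'ᶜ) : Sᶜ ⊆ S'ᶜ := by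
  have F : ∀ a b : V, a ∈ S'ᶜ → ¬G.Adj b a → b ∈ S'ᶜ := by
    intro a b ha hab
    by_contra hb
    exact hab (sep_adj_compl hP4 hS' (Set.notMem_compl_iff.mp hb) ha)
  -- a vertex `z ∈ Sᶜ` not reachable from `v` in `G[Sᶜ]`
  have hnc : ¬(G.induce Sᶜ).Preconnected := fun hp => hS.1.2 ((connected_iff _).mpr ⟨hp, ⟨⟨v, hv⟩⟩⟩)
  have : ∃ u w : ↥(Sᶜ), ¬(G.induce Sᶜ).Reachable u w := by
    by_contra hc
    push_neg at hc
    exact hnc fun u w => hc u w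
  obtain ⟨u, w, huw⟩ := this
  obtain ⟨z, hz⟩ : ∃ z : ↥(Sᶜ), ¬(G.induce Sᶜ).Reachable ⟨v, hv⟩ z := by
    by_cases hr : (G.induce Sᶜ).Reachable ⟨v, hv⟩ u
    · exact ⟨w, fun h => huw (hr.symm.trans h)⟩
    · exact ⟨u, hr⟩
  have hvz : ¬G.Adj v z.val := fun h =>
    hz (Adj.reachable (show (G.induce Sᶜ).Adj ⟨v, hv⟩ z from h))
  have hzS' : z.val ∈ S'ᶜ := F v z.val hv' (fun h => hvz h.symm)
  intro x hx
  by_cases hA : G.Adj v x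
  · have hxz : ¬G.Adj x z.val := fun h =>
      hz ((Adj.reachable (show (G.induce Sᶜ).Adj ⟨v, hv⟩ ⟨x, hx⟩ from hA)).trans
        (Adj.reachable (show (G.induce Sᶜ).Adj ⟨x, hx⟩ z from h)))
    exact F z.val x hzS' hxz
  · exact F v x hv' (fun h => hA h.symm)

/-- Two distinct minimal vertex separators of a connected cograph have disjoint
complements. -/
theorem stmt_5 (G : SimpleGraph V) (hconn : G.Connected) (hP4 : IsP4Free G)
    (S S' : Set V) (hS : IsMinimalVertexSeparator G S) (hS' : IsMinimalVertexSeparator G S')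
    (hne : S ≠ S') : Disjoint Sᶜ S'ᶜ := by
  by_contra h
  obtain ⟨v, hv, hv'⟩ := Set.not_disjoint_iff.mp h
  have h1 := compl_subset_compl_aux hP4 hS hS' hv hv'
  have h2 := compl_subset_compl_aux hP4 hS' hS hv' hv
  exact hne (compl_inj_iff.mp (Set.Subset.antisymm h1 h2))
end

section
/- Let G be a graph that is the join of two graphs G_1 and G_2. Then the minimum size of an edge separator of G equals the minimum degree δ(G); i.e., removing the edges incident to a minimum-degree vertex gives a minimum edge cut. -/
/-!
A join has diameter at most two: two vertices on the same side have every vertex of the other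
side as a common neighbour. Now let `F` be a set of edges whose removal disconnects `G`, and `S`
a union of components of `G - F`, so every edge of `G` leaving `S` lies in `F`. If every vertex
of `S` has a neighbour outside `S`, the edges leaving `S` are at least as many as the neighbours
of any `u ∈ S`, whence `δ(G) ≤ |F|`; the same holds for the complement of `S`. If neither is the
case, some `x ∈ S` has all its neighbours in `S` and some `y ∉ S` all its neighbours outside `S`,
so `x` and `y` are at distance at least three. The edges at a vertex of minimum degree show that
the bound is attained.
-/

open SimpleGraph Finset

variable {V : Type*}

namespace SimpleGraph

section Cut

variable [Fintype V] {G : SimpleGraph V} [DecidableRel G.Adj]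

def crossPairs [DecidableEq V] (G : SimpleGraph V) [DecidableRel G.Adj] (S : Finset V) :
    Finset (V × V) :=
  (S ×ˢ Sᶜ).filter fun p => G.Adj p.1 p.2

lemma card_crossPairs_le [DecidableEq V] {F : Finset (Sym2 V)} {S : Finset V}
    (hS : ∀ x y, (G.deleteEdges F).Adj x y → (x ∈ S ↔ y ∈ S)) :
    #(G.crossPairs S) ≤ #F := by
  refine card_le_card_of_injOn (fun p => s(p.1, p.2)) (fun p hp => ?_) (fun p hp q hq hpq => ?_)
  · simp only [crossPairs, coe_filter, mem_product, mem_compl, Set.mem_ofPred_eq] at hp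
    by_contra hpF
    exact hp.1.2 ((hS p.1 p.2 (deleteEdges_adj.2 ⟨hp.2, hpF⟩)).1 hp.1.1)
  · simp only [crossPairs, coe_filter, mem_product, mem_compl, Set.mem_ofPred_eq] at hp hq
    rcases Sym2.eq_iff.1 hpq with ⟨h1, h2⟩ | ⟨h1, -⟩
    · exact Prod.ext h1 h2
    · exact absurd (h1 ▸ hp.1.1) hq.1.2

/-- Each neighbour `y` of `u` outside `S` gives the pair `(u, y)`; each neighbour `y` inside `S`
gives the pair `(y, g y)` through a chosen outside neighbour `g y`. -/
lemma degree_le_card_crossPairs [DecidableEq V] {S : Finset V} {u : V} (hu : u ∈ S)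
    (hS : ∀ x ∈ S, ∃ y ∉ S, G.Adj x y) :
    G.degree u ≤ #(G.crossPairs S) := by
  choose! g hgS hg using hS
  rw [← card_neighborFinset_eq_degree]
  refine card_le_card_of_injOn (fun y => if y ∈ S then (y, g y) else (u, y))
    (fun y hy => ?_) (fun y hy y' hy' hyy' => ?_)
  · rw [mem_coe, mem_neighborFinset] at hy
    by_cases hyS : y ∈ S <;> simp [crossPairs, hyS, hgS, hg, hu, hy]
  · rw [mem_coe, mem_neighborFinset] at hy hy'
    by_cases hyS : y ∈ S <;> by_cases hy'S : y' ∈ S <;>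
      simp only [hyS, hy'S, if_true, if_false, Prod.mk.injEq] at hyy'
    · exact hyy'.1
    · exact absurd hyy'.1.symm (G.ne_of_adj hy)
    · exact absurd hyy'.1 (G.ne_of_adj hy')
    · exact hyy'.2

lemma minDegree_le_card_of_cut {F : Finset (Sym2 V)} {S : Finset V} {u : V}
    (hS : ∀ x y, (G.deleteEdges F).Adj x y → (x ∈ S ↔ y ∈ S)) (hu : u ∈ S)
    (hout : ∀ x ∈ S, ∃ y ∉ S, G.Adj x y) :
    G.minDegree ≤ #F := by
  classical
  exact (G.minDegree_le_degree u).trans <|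
    (degree_le_card_crossPairs hu hout).trans (card_crossPairs_le hS)

/-- The hypothesis `hG` says that `G` has diameter at most two. -/
theorem minDegree_le_card_of_not_connected_deleteEdges
    (hG : ∀ x y, x ≠ y → ¬G.Adj x y → ∃ z, G.Adj x z ∧ G.Adj z y)
    {F : Finset (Sym2 V)} (hF : ¬(G.deleteEdges F).Connected) :
    G.minDegree ≤ #F := by
  classical
  rcases isEmpty_or_nonempty V with hV | hV
  · simp
  obtain ⟨u, w, huw⟩ : ∃ u w, ¬(G.deleteEdges F).Reachable u w := by
    simpa [connected_iff, Preconnected] using hF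
  set S := univ.filter ((G.deleteEdges F).Reachable u)
  have hS : ∀ x y, (G.deleteEdges F).Adj x y → (x ∈ S ↔ y ∈ S) := fun x y h => by
    simp only [S, mem_filter, mem_univ, true_and]
    exact ⟨fun hx => hx.trans h.reachable, fun hy => hy.trans h.symm.reachable⟩
  have hSc : ∀ x y, (G.deleteEdges F).Adj x y → (x ∈ Sᶜ ↔ y ∈ Sᶜ) := fun x y h => by
    simp only [mem_compl, hS x y h]
  by_cases hout : ∀ x ∈ S, ∃ y ∉ S, G.Adj x y
  · exact minDegree_le_card_of_cut hS (by simp [S] : u ∈ S) hout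
  by_cases hin : ∀ y ∈ Sᶜ, ∃ x ∉ Sᶜ, G.Adj y x
  · exact minDegree_le_card_of_cut hSc (by simp [S, huw] : w ∈ Sᶜ) hin
  push Not at hout hin
  obtain ⟨x, hxS, hx⟩ := hout
  obtain ⟨y, hyS, hy⟩ := hin
  rw [mem_compl] at hyS
  obtain ⟨z, hxz, hzy⟩ := hG x y (fun h => hyS (h ▸ hxS)) (hx y hyS)
  exfalso
  by_cases hzS : z ∈ S
  · exact hy z (by simpa using hzS) hzy.symm
  · exact hx z hzS hxz

end Cut

lemma not_connected_deleteIncidenceSet [Nontrivial V] (G : SimpleGraph V) (v : V) :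
    ¬(G.deleteIncidenceSet v).Connected := fun h => by
  obtain ⟨w, hw⟩ := exists_ne v
  obtain ⟨p⟩ := h.preconnected v w
  cases p with
  | nil => exact hw rfl
  | cons hadj _ => exact (deleteIncidenceSet_adj.1 hadj).2.1 rfl

lemma adj_or_exists_adj_adj_of_join {G : SimpleGraph V} {f : V → Bool} (h1 : ∃ v, f v = true)
    (h2 : ∃ v, f v = false) (hjoin : ∀ u v : V, f u ≠ f v → G.Adj u v) (x y : V) :
    G.Adj x y ∨ ∃ z, G.Adj x z ∧ G.Adj z y := by
  by_cases hxy : f x = f y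
  · obtain ⟨z, hz⟩ : ∃ z, f z ≠ f x := by
      cases hfx : f x
      · exact h1.imp fun z hz => by simp [hz]
      · exact h2.imp fun z hz => by simp [hz]
    exact Or.inr ⟨z, hjoin x z (Ne.symm hz), hjoin z y (hxy ▸ hz)⟩
  · exact Or.inl (hjoin x y hxy)

end SimpleGraph

theorem stmt_8_general [Fintype V] (G : SimpleGraph V) [DecidableRel G.Adj]
    (f : V → Bool) (h1 : ∃ v, f v = true) (h2 : ∃ v, f v = false)
    (hjoin : ∀ u v : V, f u ≠ f v → G.Adj u v) :
    IsLeast {n : ℕ | ∃ F : Finset (Sym2 V), ↑F ⊆ G.edgeSet ∧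
      ¬(G.deleteEdges ↑F).Connected ∧ F.card = n} G.minDegree := by
  classical
  have : Nontrivial V := by
    obtain ⟨a, ha⟩ := h1
    obtain ⟨b, hb⟩ := h2
    exact ⟨a, b, fun hab => by simp [hab, hb] at ha⟩
  refine ⟨?_, ?_⟩
  · obtain ⟨v, hv⟩ := G.exists_minimal_degree_vertex
    refine ⟨G.incidenceFinset v, ?_, ?_, by rw [card_incidenceFinset_eq_degree, hv]⟩
    · simpa using G.incidenceSet_subset v
    · rw [coe_incidenceFinset]
      exact G.not_connected_deleteIncidenceSet v
  · rintro n ⟨F, -, hF, rfl⟩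
    exact minDegree_le_card_of_not_connected_deleteEdges
      (fun x y _ hxy => (adj_or_exists_adj_adj_of_join h1 h2 hjoin x y).resolve_left hxy) hF

/-- If `G` is the join of two graphs `G_1` and `G_2` (the nonempty fibers of `f`), then
the minimum size of an edge separator of `G` equals the minimum degree `δ(G)`. -/
theorem stmt_8 [Fintype V] [Nonempty V] (G : SimpleGraph V) [DecidableRel G.Adj]
    (f : V → Bool) (h1 : ∃ v, f v = true) (h2 : ∃ v, f v = false)
    (hjoin : ∀ u v : V, f u ≠ f v → G.Adj u v) :
    IsLeast {n : ℕ | ∃ F : Finset (Sym2 V), ↑F ⊆ G.edgeSet ∧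
      ¬(G.deleteEdges ↑F).Connected ∧ F.card = n} G.minDegree :=
  stmt_8_general G f h1 h2 hjoin
end

section
/- Let G be a connected cograph. Then the edge connectivity of G equals its minimum degree δ(G). -/
open SimpleGraph

variable {V : Type*}

lemma common_nbr {G : SimpleGraph V} (hP4 : IsP4Free G) {a b : V} (p : G.Walk a b)
    (hne : a ≠ b) (hnadj : ¬G.Adj a b) : ∃ c, G.Adj a c ∧ G.Adj c b := by
  induction p with
  | nil => exact absurd rfl hne
  | @cons a x b h q ih =>
    by_cases hxb : x = b
    · exact absurd (hxb ▸ h) hnadj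
    by_cases hadjxb : G.Adj x b
    · exact ⟨x, h, hadjxb⟩
    obtain ⟨c, hxc, hcb⟩ := ih hxb hadjxb
    by_cases hac : G.Adj a c
    · exact ⟨c, hac, hcb⟩
    -- a - x - c - b is an induced P4, contradiction
    have hax : a ≠ x := h.ne
    have hacne : a ≠ c := by rintro rfl; exact hnadj (hcb)
    have hxcne : x ≠ c := hxc.ne
    have hcbne : c ≠ b := hcb.ne
    exact absurd ⟨h, hxc, hcb, hac, hnadj, hadjxb⟩
      (hP4 a x c b hax hacne hne hxcne hxb hcbne)

/-- The counting half of Plesník's argument. -/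
lemma count_lemma [Fintype V] [Nonempty V] (G : SimpleGraph V) [DecidableRel G.Adj]
    (F : Finset (Sym2 V)) (S : Finset V) (hS : S.Nonempty)
    (hcross : ∀ a ∈ S, ∀ b ∉ S, G.Adj a b → s(a, b) ∈ F)
    (htouch : ∀ a ∈ S, ∃ b ∉ S, G.Adj a b)
    (hF : F.card < G.minDegree) : False := by
  classical
  set c : V → ℕ := fun a => ((G.neighborFinset a).filter (· ∉ S)).card with hc
  -- the crossing edges biUnion
  have hdisj : ∀ a ∈ S, ∀ a' ∈ S, a ≠ a' →
      Disjoint (((G.neighborFinset a).filter (· ∉ S)).image (fun b => s(a, b)))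
        (((G.neighborFinset a').filter (· ∉ S)).image (fun b => s(a', b))) := by
    intro a ha a' ha' hne
    simp only [Finset.disjoint_left, Finset.mem_image, Finset.mem_filter,
      mem_neighborFinset] at *
    rintro e ⟨b, ⟨hb1, hb2⟩, rfl⟩ ⟨b', ⟨hb1', hb2'⟩, he⟩
    rcases Sym2.eq_iff.mp he with ⟨h1, h2⟩ | ⟨h1, h2⟩
    · exact hne h1.symm
    · exact hb2' (h2 ▸ ha)
  have hsum : ∑ a ∈ S, c a ≤ F.card := by
    have hinj : ∀ a ∈ S,
        (((G.neighborFinset a).filter (· ∉ S)).image (fun b => s(a, b))).card = c a := by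
      intro a ha
      rw [hc]
      apply Finset.card_image_of_injOn
      intro b hb b' hb' he
      simp only [Finset.mem_coe, Finset.mem_filter, mem_neighborFinset] at hb hb'
      rcases Sym2.eq_iff.mp he with ⟨_, h2⟩ | ⟨h1, h2⟩
      · exact h2
      · exact absurd ha (h1 ▸ hb'.2)
    calc ∑ a ∈ S, c a
        = (S.biUnion (fun a => ((G.neighborFinset a).filter (· ∉ S)).image
            (fun b => s(a, b)))).card := by
          rw [Finset.card_biUnion hdisj]; exact (Finset.sum_congr rfl hinj).symm
      _ ≤ F.card := by
          apply Finset.card_le_card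
          intro e he
          simp only [Finset.mem_biUnion, Finset.mem_image, Finset.mem_filter,
            mem_neighborFinset] at he
          obtain ⟨a, ha, b, ⟨hb1, hb2⟩, rfl⟩ := he
          exact hcross a ha b hb2 hb1
  have hck : ∀ a ∈ S, 1 ≤ c a := by
    intro a ha
    obtain ⟨b, hb1, hb2⟩ := htouch a ha
    rw [hc, Nat.succ_le_iff, Finset.card_pos]
    exact ⟨b, by simp [hb1, hb2]⟩
  have hdeg : ∀ a ∈ S, G.minDegree + 1 ≤ S.card + c a := by
    intro a ha
    have h1 : G.degree a = ((G.neighborFinset a).filter (· ∈ S)).card + c a := by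
      rw [hc, ← G.card_neighborFinset_eq_degree a]
      exact (Finset.card_filter_add_card_filter_not _).symm
    have h2 : ((G.neighborFinset a).filter (· ∈ S)).card ≤ S.card - 1 := by
      have : (G.neighborFinset a).filter (· ∈ S) ⊆ S.erase a := by
        intro b hb
        simp only [Finset.mem_filter, mem_neighborFinset] at hb
        exact Finset.mem_erase.mpr ⟨hb.1.ne', hb.2⟩
      simpa [Finset.card_erase_of_mem ha] using Finset.card_le_card this
    have h3 : 1 ≤ S.card := Finset.card_pos.mpr hS
    have := G.minDegree_le_degree a
    omega
  -- arithmetic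
  have hSm : S.card ≤ ∑ a ∈ S, c a := by
    calc S.card = ∑ _a ∈ S, 1 := by simp
      _ ≤ ∑ a ∈ S, c a := Finset.sum_le_sum hck
  have hmain : (G.minDegree + 1) * S.card ≤ S.card * S.card + ∑ a ∈ S, c a := by
    calc (G.minDegree + 1) * S.card = ∑ _a ∈ S, (G.minDegree + 1) := by
          simp [Nat.mul_comm]
      _ ≤ ∑ a ∈ S, (S.card + c a) := Finset.sum_le_sum hdeg
      _ = S.card * S.card + ∑ a ∈ S, c a := by rw [Finset.sum_add_distrib]; simp [Nat.mul_comm]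
  set m := ∑ a ∈ S, c a
  set k := S.card
  have hk1 : 1 ≤ k := Finset.card_pos.mpr hS
  have : m < G.minDegree := lt_of_le_of_lt hsum hF
  nlinarith [hmain, hSm, hk1, this]

/-- The edge connectivity of a connected cograph (on at least two vertices) equals its
minimum degree: `δ(G)` is the least size of an edge set whose deletion disconnects `G`. -/
theorem stmt_9 [Fintype V] [Nonempty V] (G : SimpleGraph V) [DecidableRel G.Adj]
    (hconn : G.Connected) (hP4 : IsP4Free G) (hcard : 1 < Fintype.card V) :
    IsLeast {n : ℕ | ∃ F : Finset (Sym2 V), ↑F ⊆ G.edgeSet ∧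
      ¬(G.deleteEdges ↑F).Connected ∧ F.card = n} G.minDegree := by
  classical
  constructor
  · -- membership: delete all edges at a minimum degree vertex
    obtain ⟨v, hv⟩ := G.exists_minimal_degree_vertex
    refine ⟨G.incidenceFinset v, ?_, ?_, ?_⟩
    · intro e he
      rw [Finset.mem_coe, mem_incidenceFinset] at he
      exact G.incidenceSet_subset v he
    · intro hcon
      obtain ⟨w, z, hwz⟩ := Fintype.exists_pair_of_one_lt_card hcard
      have hvw : ∃ w, w ≠ v := by
        rcases eq_or_ne w v with rfl | h
        · exact ⟨z, hwz.symm⟩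
        · exact ⟨w, h⟩
      obtain ⟨w, hw⟩ := hvw
      obtain ⟨p⟩ := hcon.preconnected v w
      cases p with
      | nil => exact hw rfl
      | cons h q =>
        rw [deleteEdges_adj] at h
        exact h.2 (by
          rw [Finset.mem_coe, mem_incidenceFinset]
          exact ⟨(G.mem_edgeSet.mpr h.1), Sym2.mem_mk_left _ _⟩)
    · rw [G.card_incidenceFinset_eq_degree, hv]
  · -- lower bound
    rintro n ⟨F, hFsub, hFdisc, rfl⟩
    by_contra hlt
    push_neg at hlt
    apply hFdisc
    set G' := G.deleteEdges (↑F : Set (Sym2 V)) with hG'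
    refine ⟨fun u w => ?_⟩
    by_contra hr
    set A : Finset V := Finset.univ.filter (fun x => G'.Reachable u x) with hA
    have hmemA : ∀ x, x ∈ A ↔ G'.Reachable u x := by
      intro x; simp [hA]
    have huA : u ∈ A := (hmemA u).mpr (Reachable.refl u)
    have hwA : w ∉ A := fun h => hr ((hmemA w).mp h)
    have hclosed : ∀ a ∈ A, ∀ b, G'.Adj a b → b ∈ A := by
      intro a ha b hab
      exact (hmemA b).mpr (((hmemA a).mp ha).trans hab.reachable)
    have hcrossA : ∀ a ∈ A, ∀ b ∉ A, G.Adj a b → s(a, b) ∈ F := by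
      intro a ha b hb hab
      by_contra hnF
      exact hb (hclosed a ha b (deleteEdges_adj.mpr ⟨hab, hnF⟩))
    by_cases hall : ∀ a ∈ A, ∃ b ∉ A, G.Adj a b
    · exact count_lemma G F A ⟨u, huA⟩ hcrossA hall hlt
    · push_neg at hall
      obtain ⟨a, ha, hano⟩ := hall
      -- every vertex outside A has a neighbor in A
      have htouch : ∀ b ∉ A, ∃ c ∈ A, G.Adj b c := by
        intro b hb
        by_contra hbc
        push_neg at hbc
        have hab : a ≠ b := fun h => hb (h ▸ ha)
        have hnadj : ¬G.Adj a b := fun h => hano b hb h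
        obtain ⟨p⟩ := hconn.preconnected a b
        obtain ⟨c, hac, hcb⟩ := common_nbr hP4 p hab hnadj
        have hcA : c ∈ A := by
          by_contra hcA
          exact hano c hcA hac
        exact hbc c hcA hcb.symm
      refine count_lemma G F Aᶜ ⟨w, Finset.mem_compl.mpr hwA⟩ ?_ ?_ hlt
      · intro b hb c hc hbc
        rw [Finset.mem_compl] at hb
        rw [Finset.notMem_compl] at hc
        rw [Sym2.eq_swap]
        exact hcrossA c hc b hb hbc.symm
      · intro b hb
        rw [Finset.mem_compl] at hb
        obtain ⟨c, hcA, hbc⟩ := htouch b hb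
        exact ⟨c, Finset.notMem_compl.mpr hcA, hbc⟩
end

section
/- Let G be a k-connected cograph and suppose H is obtained from G by adding edges so that H is a (k+1)-connected cograph. For each join factor G_i of G with |V(G_i)| = n − k, let x_i ∈ V(G_i) minimize the number of non-neighbors |N̄_G(x_i)|. Then the number of added edges is at least Σ_i |N̄_G(x_i)|. -/
open SimpleGraph

variable {V : Type*}

/-- `G` is `k`-connected: it has a minimum vertex separator of size `k`
(a separator of size `k` exists and every separator has size at least `k`). -/
def IsKConnected (G : SimpleGraph V) (k : ℕ) : Prop :=
  (∃ S : Set V, IsVertexSeparator G S ∧ S.ncard = k) ∧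
  ∀ S : Set V, IsVertexSeparator G S → k ≤ S.ncard

namespace Aux17

/-- One adjacency step inside a vertex set `s`. -/
def Stp (H : SimpleGraph V) (s : Set V) (a b : V) : Prop := a ∈ s ∧ b ∈ s ∧ H.Adj a b

/-- Reachability inside a vertex set `s`. -/
def Rch (H : SimpleGraph V) (s : Set V) : V → V → Prop := Relation.ReflTransGen (Stp H s)

lemma stp_symm (H : SimpleGraph V) (s : Set V) : Symmetric (Stp H s) :=
  fun _ _ h => ⟨h.2.1, h.1, h.2.2.symm⟩

lemma rch_symm {H : SimpleGraph V} {s : Set V} {u v : V} (h : Rch H s u v) : Rch H s v u :=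
  by
    have : Std.Symm (Stp H s) := ⟨fun _ _ h' => stp_symm H s h'⟩
    exact (show Std.Symm (Relation.ReflTransGen (Stp H s)) from
      Relation.ReflTransGen.symmetric).symm u v h

lemma rch_cross {H : SimpleGraph V} {s Y : Set V} {u v : V} (h : Rch H s u v)
    (hu : u ∉ Y) (hv : v ∈ Y) :
    ∃ p q, p ∈ s ∧ q ∈ s ∧ p ∉ Y ∧ q ∈ Y ∧ H.Adj p q := by
  induction h with
  | refl => exact absurd hv hu
  | @tail b c hab hbc ih =>
    by_cases hb : b ∈ Y
    · exact ih hb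
    · exact ⟨b, c, hbc.1, hbc.2.1, hb, hv, hbc.2.2⟩

lemma walk_rch {H : SimpleGraph V} {s : Set V} {a b : ↥s}
    (w : (H.induce s).Walk a b) : Rch H s a b := by
  induction w with
  | nil => exact Relation.ReflTransGen.refl
  | @cons x y z h _ ih =>
    exact Relation.ReflTransGen.head ⟨x.2, y.2, by exact h⟩ ih

lemma rch_reachable {H : SimpleGraph V} {s : Set V} {u v : V} (h : Rch H s u v) :
    ∀ (hu : u ∈ s) (hv : v ∈ s), (H.induce s).Reachable ⟨u, hu⟩ ⟨v, hv⟩ := by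
  induction h with
  | refl => intro hu hv; exact SimpleGraph.Reachable.refl _
  | @tail b c hab hbc ih =>
    intro hu hc
    exact (ih hu hbc.1).trans (SimpleGraph.Adj.reachable (by exact hbc.2.2))

lemma connected_iff_rch {H : SimpleGraph V} {s : Set V} :
    (H.induce s).Connected ↔ s.Nonempty ∧ ∀ u ∈ s, ∀ v ∈ s, Rch H s u v := by
  constructor
  · intro h
    refine ⟨?_, ?_⟩
    · obtain ⟨⟨x, hx⟩⟩ := h.nonempty; exact ⟨x, hx⟩
    · intro u hu v hv
      obtain ⟨w⟩ := h.preconnected ⟨u, hu⟩ ⟨v, hv⟩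
      exact walk_rch w
  · rintro ⟨⟨x, hx⟩, hc⟩
    rw [SimpleGraph.connected_iff]
    refine ⟨fun a b => ?_, ⟨⟨x, hx⟩⟩⟩
    obtain ⟨a, ha⟩ := a; obtain ⟨b, hb⟩ := b
    exact rch_reachable (hc a ha b hb) ha hb

/-- Join decomposition of a connected P4-free graph on a finite vertex set. -/
theorem join_decomp [Fintype V] (H : SimpleGraph V) (hP4 : IsP4Free H) :
    ∀ (n : ℕ) (s : Set V), s.ncard = n → 2 ≤ n →
      (∀ u ∈ s, ∀ v ∈ s, Rch H s u v) →
      ∃ A B : Set V, A.Nonempty ∧ B.Nonempty ∧ A ∪ B = s ∧ Disjoint A B ∧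
        ∀ a ∈ A, ∀ b ∈ B, H.Adj a b := by
  intro n
  induction n using Nat.strong_induction_on with
  | _ n IH =>
  intro s hcard hn hconn
  have hsfin : s.Finite := s.toFinite
  have hsne : s.Nonempty := by
    rw [← Set.ncard_pos hsfin, hcard]; omega
  obtain ⟨v, hv⟩ := hsne
  set s' : Set V := s \ {v} with hs'def
  have hs'sub : s' ⊆ s := Set.diff_subset
  have hvs' : v ∉ s' := fun h => h.2 rfl
  have hs'card : s'.ncard = n - 1 := by
    rw [hs'def, Set.ncard_diff_singleton_of_mem hv, hcard]
  have hs'ne : s'.Nonempty := by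
    rw [← Set.ncard_pos s'.toFinite, hs'card]; omega
  have hins : insert v s' = s := by
    rw [hs'def, Set.insert_diff_singleton, Set.insert_eq_self.2 hv]
  -- v has a neighbor in any ≤s'-closed nonempty set C
  have hnbrC : ∀ C : Set V, C ⊆ s' → C.Nonempty →
      (∀ c ∈ C, ∀ d ∈ s', H.Adj c d → d ∈ C) → ∃ q ∈ C, H.Adj v q := by
    intro C hCs hCne hCclosed
    obtain ⟨c, hc⟩ := hCne
    have hvC : v ∉ C := fun h => hvs' (hCs h)
    obtain ⟨p, q, hps, hqs, hpC, hqC, hpq⟩ := rch_cross (hconn v hv c (hs'sub (hCs hc))) hvC hc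
    by_cases hpv : p = v
    · exact ⟨q, hqC, hpv ▸ hpq⟩
    · exact absurd (hCclosed q hqC p ⟨hps, hpv⟩ hpq.symm) hpC
  by_cases hC : ∀ u ∈ s', ∀ w ∈ s', Rch H s' u w
  · -- s' is connected
    by_cases h2 : n = 2
    · -- s' is a singleton
      have h1 : s'.ncard = 1 := by omega
      obtain ⟨w, hw⟩ := Set.ncard_eq_one.mp h1
      obtain ⟨q, hq, hadj⟩ := hnbrC s' (le_refl _) (hw ▸ ⟨w, rfl⟩) (fun c hc d hd _ => hd)
      refine ⟨{v}, s', ⟨v, rfl⟩, ⟨q, hq⟩, ?_, ?_, ?_⟩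
      · rw [Set.singleton_union, hins]
      · simp only [Set.disjoint_singleton_left]; exact hvs'
      · intro a ha b hb
        rw [Set.mem_singleton_iff] at ha
        rw [hw, Set.mem_singleton_iff] at hb
        have hqw : q = w := by rw [hw] at hq; exact hq
        rw [ha, hb, ← hqw]; exact hadj
    · -- |s'| ≥ 2, use IH
      obtain ⟨A', B', hA'ne, hB'ne, hunion, hdisj, hcross⟩ :=
        IH (n - 1) (by omega) s' hs'card (by omega) hC
      have hA's : A' ⊆ s' := hunion ▸ Set.subset_union_left
      have hB's : B' ⊆ s' := hunion ▸ Set.subset_union_right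
      set N : Set V := {u | u ∈ s' ∧ H.Adj v u} with hNdef
      have hNs' : N ⊆ s' := fun u hu => hu.1
      by_cases hA : A' ⊆ N
      · refine ⟨A', B' ∪ {v}, hA'ne, ⟨v, Or.inr rfl⟩, ?_, ?_, ?_⟩
        · rw [← Set.union_assoc, hunion, Set.union_singleton, hins]
        · refine Set.disjoint_union_right.2 ⟨hdisj, ?_⟩
          simp only [Set.disjoint_singleton_right]
          exact fun h => hvs' (hA's h)
        · rintro a ha b (hb | hb)
          · exact hcross a ha b hb
          · rw [Set.mem_singleton_iff] at hb
            rw [hb]; exact ((hA ha).2).symm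
      · by_cases hB : B' ⊆ N
        · refine ⟨B', A' ∪ {v}, hB'ne, ⟨v, Or.inr rfl⟩, ?_, ?_, ?_⟩
          · rw [← Set.union_assoc, Set.union_comm B' A', hunion, Set.union_singleton, hins]
          · refine Set.disjoint_union_right.2 ⟨hdisj.symm, ?_⟩
            simp only [Set.disjoint_singleton_right]
            exact fun h => hvs' (hB's h)
          · rintro a ha b (hb | hb)
            · exact (hcross b hb a ha).symm
            · rw [Set.mem_singleton_iff] at hb
              rw [hb]; exact ((hB ha).2).symm
        · -- mixed case: N itself works
          obtain ⟨a₀, ha₀A, ha₀N⟩ := Set.not_subset.mp hA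
          obtain ⟨b₀, hb₀B, hb₀N⟩ := Set.not_subset.mp hB
          have ha₀v : ¬H.Adj v a₀ := fun h => ha₀N ⟨hA's ha₀A, h⟩
          have hb₀v : ¬H.Adj v b₀ := fun h => hb₀N ⟨hB's hb₀B, h⟩
          have hNne : N.Nonempty := by
            obtain ⟨q, hq, hadj⟩ := hnbrC s' (le_refl _) hs'ne (fun c hc d hd _ => hd)
            exact ⟨q, hq, hadj⟩
          have hNsub : N ⊆ s := fun u hu => hs'sub (hNs' hu)
          refine ⟨N, s \ N, hNne, ⟨v, hv, fun h => hvs' (hNs' h)⟩, ?_, ?_, ?_⟩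
          · rw [Set.union_diff_cancel hNsub]
          · exact Set.disjoint_sdiff_right
          · intro q hq w hw
            have hqs' : q ∈ s' := hNs' hq
            have hqN : H.Adj v q := hq.2
            by_cases hwv : w = v
            · rw [hwv]; exact hqN.symm
            · have hws' : w ∈ s' := ⟨hw.1, hwv⟩
              have hwN : ¬H.Adj v w := fun h => hw.2 ⟨hws', h⟩
              have hwAB : w ∈ A' ∪ B' := hunion ▸ hws'
              have hqAB : q ∈ A' ∪ B' := hunion ▸ hqs'
              rcases hwAB with hwA | hwB
              · rcases hqAB with hqA | hqB
                · -- both in A' : use b₀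
                  by_contra hqw
                  refine hP4 w b₀ q v ?_ ?_ ?_ ?_ ?_ ?_
                    ⟨hcross w hwA b₀ hb₀B, (hcross q hqA b₀ hb₀B).symm, hqN.symm,
                     fun h => hqw h.symm, fun h => hwN h.symm, fun h => hb₀v h.symm⟩
                  · exact fun h => (hdisj.ne_of_mem hwA hb₀B) h
                  · exact fun h => hw.2 (h ▸ hq)
                  · exact fun h => hvs' (h ▸ hws')
                  · exact fun h => hb₀N (by rw [h]; exact hq)
                  · exact fun h => hvs' (h ▸ hB's hb₀B)
                  · exact fun h => hvs' (h ▸ hqs')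
                · exact (hcross w hwA q hqB).symm
              · rcases hqAB with hqA | hqB
                · exact hcross q hqA w hwB
                · -- both in B' : use a₀
                  by_contra hqw
                  refine hP4 w a₀ q v ?_ ?_ ?_ ?_ ?_ ?_
                    ⟨(hcross a₀ ha₀A w hwB).symm, hcross a₀ ha₀A q hqB, hqN.symm,
                     fun h => hqw h.symm, fun h => hwN h.symm, fun h => ha₀v h.symm⟩
                  · exact fun h => (hdisj.ne_of_mem ha₀A hwB) h.symm
                  · exact fun h => hw.2 (h ▸ hq)
                  · exact fun h => hvs' (h ▸ hws')
                  · exact fun h => ha₀N (by rw [h]; exact hq)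
                  · exact fun h => hvs' (h ▸ hA's ha₀A)
                  · exact fun h => hvs' (h ▸ hqs')
  · -- s' not connected: v is adjacent to everything in s'
    push_neg at hC
    obtain ⟨z, hz, w₀, hw₀, hzw⟩ := hC
    have hall : ∀ x ∈ s', H.Adj v x := by
      intro x hx
      by_contra hvx
      set C : Set V := {w | w ∈ s' ∧ Rch H s' x w} with hCdef
      have hxC : x ∈ C := ⟨hx, Relation.ReflTransGen.refl⟩
      have hCs' : C ⊆ s' := fun u hu => hu.1
      have hCclosed : ∀ c ∈ C, ∀ d ∈ s', H.Adj c d → d ∈ C := by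
        intro c hc d hd hcd
        exact ⟨hd, hc.2.tail ⟨hc.1, hd, hcd⟩⟩
      -- D := s' \ C nonempty
      have hDne : (s' \ C).Nonempty := by
        by_contra hD
        rw [Set.not_nonempty_iff_eq_empty, Set.diff_eq_empty] at hD
        exact hzw ((rch_symm (hD hz).2).trans (hD hw₀).2)
      obtain ⟨d₀, hd₀⟩ := hDne
      -- v has a neighbor y in D
      have hyD : ∃ y ∈ s' \ C, H.Adj v y := by
        apply hnbrC (s' \ C) Set.diff_subset ⟨d₀, hd₀⟩
        intro c hc d hd hcd
        refine ⟨hd, fun hdC => hc.2 (hCclosed d hdC c hc.1 hcd.symm)⟩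
      obtain ⟨y, hyD', hvy⟩ := hyD
      -- v has a neighbor in C
      obtain ⟨c₀, hc₀C, hvc₀⟩ := hnbrC C hCs' ⟨x, hxC⟩ hCclosed
      -- find boundary edge p-q inside C with q adj v, p not adj v
      set U : Set V := {w | w ∈ C ∧ H.Adj v w} with hUdef
      have hxU : x ∉ U := fun h => hvx h.2
      have hc₀U : c₀ ∈ U := ⟨hc₀C, hvc₀⟩
      obtain ⟨p, q, hps', hqs', hpU, hqU, hpq⟩ := rch_cross hc₀C.2 hxU hc₀U
      have hqC : q ∈ C := hqU.1
      have hpC : p ∈ C := hCclosed q hqC p hps' hpq.symm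
      have hpv : ¬H.Adj v p := fun h => hpU ⟨hpC, h⟩
      -- P4 : p - q - v - y
      refine hP4 p q v y ?_ ?_ ?_ ?_ ?_ ?_
        ⟨hpq, hqU.2.symm, hvy, fun h => hpv h.symm,
         fun h => hyD'.2 (hCclosed p hpC y hyD'.1 h),
         fun h => hyD'.2 (hCclosed q hqC y hyD'.1 h)⟩
      · exact hpq.ne
      · exact fun h => hvs' (h ▸ hps')
      · exact fun h => hyD'.2 (h ▸ hpC)
      · exact fun h => hvs' (h ▸ hqs')
      · exact fun h => hyD'.2 (h ▸ hqC)
      · exact fun h => hvs' (h.symm ▸ hyD'.1)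
    refine ⟨{v}, s', ⟨v, rfl⟩, hs'ne, ?_, ?_, ?_⟩
    · rw [Set.singleton_union, hins]
    · simp only [Set.disjoint_singleton_left]; exact hvs'
    · intro a ha b hb
      rw [Set.mem_singleton_iff] at ha
      rw [ha]; exact hall b hb


lemma count_bound [Fintype V] {t : ℕ} (G H : SimpleGraph V) (f : V → Fin t) (i : Fin t)
    (hjoin : ∀ u v : V, f u ≠ f v → G.Adj u v)
    (A B : Set V) (hAB : A ∪ B = f ⁻¹' {i}) (hdisj : Disjoint A B)
    (hAne : A.Nonempty)
    (hcross : ∀ a ∈ A, ∀ b ∈ B, H.Adj a b)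
    (hmiss : ∀ a ∈ A, ∃ b ∈ B, ¬G.Adj a b) :
    sInf {m : ℕ | ∃ x : V, f x = i ∧ ({y : V | y ≠ x ∧ ¬G.Adj x y}).ncard = m}
      ≤ {e ∈ H.edgeSet \ G.edgeSet | ∀ v ∈ e, f v = i}.ncard := by
  classical
  obtain ⟨x₀, hx₀⟩ := hAne
  have hx₀P : x₀ ∈ f ⁻¹' {i} := by rw [← hAB]; exact Or.inl hx₀
  have hfx₀ : f x₀ = i := hx₀P
  have hx₀B : x₀ ∉ B := Set.disjoint_left.mp hdisj hx₀
  refine le_trans (Nat.sInf_le ⟨x₀, hfx₀, rfl⟩) ?_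
  have hsel : ∀ a : V, ∃ b : V, a ∈ A → (b ∈ B ∧ ¬G.Adj a b) := by
    intro a
    by_cases h : a ∈ A
    · obtain ⟨b, hb, hnb⟩ := hmiss a h; exact ⟨b, fun _ => ⟨hb, hnb⟩⟩
    · exact ⟨x₀, fun h' => absurd h' h⟩
  choose g hg using hsel
  set φ : V → Sym2 V := fun y => if y ∈ B then s(x₀, y) else s(y, g y) with hφ
  have hmem : ∀ y, y ≠ x₀ → ¬G.Adj x₀ y → (f y = i ∧ y ∈ A ∪ B) := by
    intro y hne hnadj
    have hfy : f y = i := by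
      by_contra h
      exact hnadj (hjoin x₀ y (by rw [hfx₀]; exact fun hh => h hh.symm))
    exact ⟨hfy, by rw [hAB]; exact hfy⟩
  apply Set.ncard_le_ncard_of_injOn φ
  · intro y hy
    obtain ⟨hyne, hynadj⟩ := hy
    obtain ⟨hfy, hyAB⟩ := hmem y hyne hynadj
    by_cases hyB : y ∈ B
    · simp only [hφ, if_pos hyB]
      refine ⟨⟨(H.mem_edgeSet).2 (hcross x₀ hx₀ y hyB),
        fun hme => hynadj ((G.mem_edgeSet).1 hme)⟩, ?_⟩
      intro v hv
      rcases Sym2.mem_iff.1 hv with rfl | rfl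
      · exact hfx₀
      · exact hfy
    · have hyA : y ∈ A := hyAB.resolve_right hyB
      obtain ⟨hgB, hgn⟩ := hg y hyA
      simp only [hφ, if_neg hyB]
      refine ⟨⟨(H.mem_edgeSet).2 (hcross y hyA (g y) hgB),
        fun hme => hgn ((G.mem_edgeSet).1 hme)⟩, ?_⟩
      intro v hv
      rcases Sym2.mem_iff.1 hv with rfl | rfl
      · exact hfy
      · have : g y ∈ A ∪ B := Or.inr hgB
        rw [hAB] at this; exact this
  · intro y hy y' hy' heq
    obtain ⟨hfy, hyAB⟩ := hmem y hy.1 hy.2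
    obtain ⟨hfy', hyAB'⟩ := hmem y' hy'.1 hy'.2
    by_cases h1 : y ∈ B <;> by_cases h2 : y' ∈ B <;>
      simp only [hφ, if_pos, if_neg, h1, h2, if_true, if_false] at heq <;>
      rw [Sym2.eq_iff] at heq
    · rcases heq with ⟨_, h⟩ | ⟨h, h'⟩
      · exact h
      · exact absurd h.symm hy'.1
    · have hyA' : y' ∈ A := hyAB'.resolve_right h2
      rcases heq with ⟨h, _⟩ | ⟨h, _⟩
      · exact absurd h.symm hy'.1
      · exact absurd (h ▸ (hg y' hyA').1) hx₀B
    · have hyA : y ∈ A := hyAB.resolve_right h1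
      rcases heq with ⟨h, h'⟩ | ⟨h, h'⟩
      · exact absurd h hy.1
      · exact absurd (h'.symm ▸ (hg y hyA).1) hx₀B
    · have hyA : y ∈ A := hyAB.resolve_right h1
      have hyA' : y' ∈ A := hyAB'.resolve_right h2
      rcases heq with ⟨h, _⟩ | ⟨h, h'⟩
      · exact h
      · exact absurd (h ▸ (hg y' hyA').1 : y ∈ B) h1

end Aux17

/-- Lower bound for `(k+1)`-vertex connectivity augmentation of cographs: let `G` be a
`k`-connected cograph that is the join of the parts given by the children of its cotree
root, and let `H ⊇ G` be a `(k+1)`-connected cograph obtained by adding edges. For each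
part `G_i` with `|V(G_i)| = n - k`, let `x_i ∈ V(G_i)` minimize the number of
non-neighbors `|N̄_G(x_i)|`. Then at least `Σ_i |N̄_G(x_i)|` edges were added. -/
theorem stmt_17 [Fintype V] (G : SimpleGraph V) (hconn : G.Connected) (hP4 : IsP4Free G)
    (k t : ℕ) (ht : 2 ≤ t) (f : V → Fin t) (hsurj : Function.Surjective f)
    (hjoin : ∀ u v : V, f u ≠ f v → G.Adj u v)
    (hparts : ∀ i : Fin t, (f ⁻¹' {i}).ncard = 1 ∨ ¬(G.induce (f ⁻¹' {i})).Connected)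
    (hk : IsKConnected G k)
    (H : SimpleGraph V) (hGH : G ≤ H) (hH4 : IsP4Free H) (hk1 : IsKConnected H (k + 1)) :
    ∑ i : Fin t, (if (f ⁻¹' {i}).ncard = Fintype.card V - k
        then sInf {m : ℕ | ∃ x : V, f x = i ∧ ({y : V | y ≠ x ∧ ¬G.Adj x y}).ncard = m}
        else 0)
      ≤ (H.edgeSet \ G.edgeSet).ncard := by
  classical
  set D : Set (Sym2 V) := H.edgeSet \ G.edgeSet with hD
  set T : Fin t → Set (Sym2 V) := fun i => {e ∈ D | ∀ v ∈ e, f v = i} with hT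
  have hstep2 : ∑ i : Fin t, (T i).ncard ≤ D.ncard := by
    calc ∑ i, (T i).ncard = ∑ i, ((T i).toFinite.toFinset).card := by
          exact Finset.sum_congr rfl fun i _ => Set.ncard_eq_toFinset_card _ _
      _ = (Finset.univ.biUnion fun i => (T i).toFinite.toFinset).card := by
          rw [Finset.card_biUnion]
          intro i _ j _ hij
          refine Finset.disjoint_left.2 fun e hei hej => ?_
          rw [Set.Finite.mem_toFinset] at hei hej
          induction e using Sym2.ind with
          | _ u w =>
            exact hij ((hei.2 u (Sym2.mem_mk_left u w)).symm.trans
              (hej.2 u (Sym2.mem_mk_left u w)))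
      _ ≤ (D.toFinite.toFinset).card := by
          refine Finset.card_le_card (Finset.biUnion_subset.2 fun i _ => ?_)
          intro e he
          rw [Set.Finite.mem_toFinset] at he ⊢
          exact he.1
      _ = D.ncard := (Set.ncard_eq_toFinset_card _ _).symm
  refine le_trans (Finset.sum_le_sum ?_) hstep2
  intro i _
  by_cases hcond : (f ⁻¹' {i}).ncard = Fintype.card V - k
  case neg => simp [hcond]
  rw [if_pos hcond]
  set P : Set V := f ⁻¹' {i} with hP
  have hPne : P.Nonempty := by obtain ⟨x, hx⟩ := hsurj i; exact ⟨x, hx⟩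
  have hPfin : P.Finite := P.toFinite
  have hP1 : 1 ≤ P.ncard := (Set.ncard_pos hPfin).2 hPne
  by_cases hone : P.ncard = 1
  · obtain ⟨x₀, hx₀⟩ := Set.ncard_eq_one.mp hone
    have hx₀P : x₀ ∈ P := by rw [hx₀]; rfl
    have hfx₀ : f x₀ = i := hx₀P
    have hNb : {y : V | y ≠ x₀ ∧ ¬G.Adj x₀ y} = ∅ := by
      ext y
      simp only [Set.mem_setOf_eq, Set.mem_empty_iff_false, iff_false, not_and, not_not]
      intro hne
      refine hjoin x₀ y ?_
      rw [hfx₀]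
      intro hfy
      have : y ∈ P := by rw [hP]; exact Set.mem_preimage.2 (by rw [← hfy]; rfl)
      rw [hx₀] at this
      exact hne this
    have h0 : (0 : ℕ) ∈ {m : ℕ | ∃ x : V, f x = i ∧
        ({y : V | y ≠ x ∧ ¬G.Adj x y}).ncard = m} :=
      ⟨x₀, hfx₀, by rw [hNb, Set.ncard_empty]⟩
    exact le_trans (Nat.sInf_le h0) (Nat.zero_le _)
  · have h2 : 2 ≤ P.ncard := by omega
    have hncG : ¬(G.induce P).Connected := (hparts i).resolve_left hone
    have hHP : (H.induce P).Connected := by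
      by_contra hcon
      have hsep : IsVertexSeparator H Pᶜ := by
        constructor
        · rw [compl_compl]; exact hPne
        · rw [compl_compl]; exact hcon
      have hge := hk1.2 Pᶜ hsep
      have hcompl : P.ncard + Pᶜ.ncard = Fintype.card V := by
        rw [Set.ncard_add_ncard_compl P hPfin (Pᶜ.toFinite), Nat.card_eq_fintype_card]
      omega
    obtain ⟨hPne', hrch⟩ := Aux17.connected_iff_rch.mp hHP
    obtain ⟨A, B, hAne, hBne, hAB, hdisj, hcross⟩ :=
      Aux17.join_decomp H hH4 P.ncard P rfl h2 hrch
    have hAP : ∀ x ∈ A, x ∈ P := fun x hx => by rw [← hAB]; exact Or.inl hx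
    have hBP : ∀ x ∈ B, x ∈ P := fun x hx => by rw [← hAB]; exact Or.inr hx
    have hside : (∀ a ∈ A, ∃ b ∈ B, ¬G.Adj a b) ∨ (∀ b ∈ B, ∃ a ∈ A, ¬G.Adj b a) := by
      by_contra hcon2
      push_neg at hcon2
      obtain ⟨⟨a₀, ha₀, ha₀c⟩, ⟨b₀, hb₀, hb₀c⟩⟩ := hcon2
      apply hncG
      rw [Aux17.connected_iff_rch]
      refine ⟨hPne, ?_⟩
      have hto : ∀ u ∈ P, Aux17.Rch G P u a₀ := by
        intro u hu
        have huAB : u ∈ A ∪ B := by rw [hAB]; exact hu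
        rcases huAB with huA | huB
        · exact Relation.ReflTransGen.head ⟨hu, hBP b₀ hb₀, (hb₀c u huA).symm⟩
            (Relation.ReflTransGen.head
              ⟨hBP b₀ hb₀, hAP a₀ ha₀, (ha₀c b₀ hb₀).symm⟩ Relation.ReflTransGen.refl)
        · exact Relation.ReflTransGen.head
            ⟨hBP u huB, hAP a₀ ha₀, (ha₀c u huB).symm⟩ Relation.ReflTransGen.refl
      intro u hu v hv
      exact (hto u hu).trans (Aux17.rch_symm (hto v hv))
    rcases hside with hmiss | hmiss
    · exact Aux17.count_bound G H f i hjoin A B hAB hdisj hAne hcross hmiss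
    · refine Aux17.count_bound G H f i hjoin B A ?_ hdisj.symm hBne ?_ ?_
      · rw [Set.union_comm]; exact hAB
      · exact fun b hb a ha => (hcross a ha b hb).symm
      · exact hmiss
end

section
/- Let G be a k-edge-connected cograph and let X be the set of vertices of degree exactly k in G. Any set of edges E_ca (from the complement of G) whose addition makes G (k+1)-edge-connected satisfies |E_ca| ≥ ρ(Ḡ[X]), where ρ denotes the (generalized) minimum edge cover number of the complement graph induced on X, with isolated vertices counting 1 each. -/
/-!
A vertex of `G`-degree `k` must have degree at least `k + 1` in the `(k + 1)`-edge-connected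
graph `H`, so it lies on an added edge, and added edges are edges of `Ḡ`. Hence the added edges
cover `X` in `Ḡ`. Those with both ends in `X` form the edge part of a generalized edge cover of
`Ḡ[X]`; every vertex of `X` they miss lies on an added edge with only one end in `X`, so charging
it to that edge bounds the trivial part by the remaining added edges.
-/

open SimpleGraph

variable {V : Type*}

/-- `G` is `k`-edge-connected: it is connected and at least `k` edges must be removed to
disconnect it. -/
def IsKEdgeConnected (G : SimpleGraph V) (k : ℕ) : Prop :=
  G.Connected ∧
  ∀ F : Finset (Sym2 V), ↑F ⊆ G.edgeSet → ¬(G.deleteEdges ↑F).Connected → k ≤ F.card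

/-- A witness of size `n` for the generalized edge cover of `H[s]`: a set `C` of edges of
`H` inside `s` together with a set `T` of vertices of `s` (the trivial components, each
counting `1`) such that every vertex of `s` lies in `T` or on an edge of `C`, with
`n = |C| + |T|`.  The minimum such `n` is `ρ(H[s]) = Σ_i ρ(H_i)`, where `ρ(H_i)` is the
minimum edge cover number of a nontrivial component and `1` for a trivial component. -/
def GenEdgeCoverWitness (H : SimpleGraph V) (s : Set V) (n : ℕ) : Prop :=
  ∃ (C : Finset (Sym2 V)) (T : Finset V),
    ↑C ⊆ H.edgeSet ∧ (∀ e ∈ C, ∀ x ∈ e, x ∈ s) ∧ ↑T ⊆ s ∧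
    (∀ x ∈ s, x ∈ T ∨ ∃ e ∈ C, x ∈ e) ∧ n = C.card + T.card

/-- The generalized minimum edge cover number `ρ(H[s])`. -/
noncomputable def genEdgeCoverNumber (H : SimpleGraph V) (s : Set V) : ℕ :=
  sInf {n : ℕ | GenEdgeCoverWitness H s n}

theorem IsKEdgeConnected.isEdgeConnected {G : SimpleGraph V} {k : ℕ}
    (hG : IsKEdgeConnected G k) : G.IsEdgeConnected k := by
  intro u v s hs
  by_contra huv
  have hfin : (s ∩ G.edgeSet).Finite :=
    Set.finite_of_encard_le_coe ((Set.encard_mono Set.inter_subset_left).trans hs.le)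
  have hk := hG.2 hfin.toFinset (by simp) fun hc ↦ huv <| by
    simpa [← deleteEdges_eq_inter_edgeSet] using hc.preconnected u v
  have : (k : ℕ∞) ≤ s.encard := by
    grw [hk, ← Set.encard_mono Set.inter_subset_left, ← hfin.encard_eq_coe_toFinset_card]
  exact (this.trans_lt hs).false

namespace SimpleGraph

theorem exists_adj_not_adj_of_degree_lt {G H : SimpleGraph V} {v : V}
    [Fintype (G.neighborSet v)] [Fintype (H.neighborSet v)] (h : G.degree v < H.degree v) :
    ∃ u, H.Adj v u ∧ ¬G.Adj v u := by
  rw [← card_neighborFinset_eq_degree, ← card_neighborFinset_eq_degree] at h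
  simpa using Finset.exists_mem_notMem_of_card_lt_card h

theorem edgeSet_sdiff_subset_edgeSet_compl (G H : SimpleGraph V) :
    H.edgeSet \ G.edgeSet ⊆ Gᶜ.edgeSet := by
  rw [← edgeSet_sdiff, sdiff_eq]
  exact edgeSet_mono inf_le_right

end SimpleGraph

open Finset

theorem genEdgeCoverNumber_le_card [Fintype V] (H : SimpleGraph V) (s : Set V)
    (D : Finset (Sym2 V)) (hDH : ↑D ⊆ H.edgeSet) (hcov : ∀ x ∈ s, ∃ e ∈ D, x ∈ e) :
    genEdgeCoverNumber H s ≤ #D := by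
  classical
  set C := D.filter fun e ↦ ∀ x ∈ e, x ∈ s
  set T := univ.filter fun x ↦ x ∈ s ∧ ∀ e ∈ C, x ∉ e
  have hCD : C ⊆ D := filter_subset _ _
  -- An uncovered vertex of `s` lies on an edge of `D \ C`, and such an edge has only one
  -- endpoint in `s`.
  have hT : #T ≤ #(D \ C) := by
    refine card_le_card_of_forall_subsingleton (· ∈ ·) ?_ ?_
    · intro x hx
      obtain ⟨hxs, hxC⟩ := (mem_filter.1 hx).2
      obtain ⟨e, heD, hxe⟩ := hcov x hxs
      exact ⟨e, mem_sdiff.2 ⟨heD, fun heC ↦ hxC e heC hxe⟩, hxe⟩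
    · intro e he x hx y hy
      by_contra hxy
      obtain ⟨heD, heC⟩ := mem_sdiff.1 he
      have hxs := (mem_filter.1 hx.1).2.1
      have hys := (mem_filter.1 hy.1).2.1
      obtain rfl := (Sym2.mem_and_mem_iff hxy).1 ⟨hx.2, hy.2⟩
      exact heC (mem_filter.2 ⟨heD, by simp [hxs, hys]⟩)
  have hwit : GenEdgeCoverWitness H s (#C + #T) := by
    refine ⟨C, T, (coe_subset.2 hCD).trans hDH, fun e he ↦ (mem_filter.1 he).2,
      fun x hx ↦ (mem_filter.1 hx).2.1, fun x hx ↦ ?_, rfl⟩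
    by_cases! h : ∀ e ∈ C, x ∉ e
    · exact .inl (mem_filter.2 ⟨mem_univ _, hx, h⟩)
    · exact .inr h
  calc genEdgeCoverNumber H s ≤ #C + #T := Nat.sInf_le hwit
    _ ≤ #(D \ C) + #C := by omega
    _ = #D := card_sdiff_add_card_eq_card hCD

theorem stmt_18_general [Fintype V] (G : SimpleGraph V) [DecidableRel G.Adj]
    (hn : 2 ≤ Fintype.card V) (k : ℕ)
    (H : SimpleGraph V) (hk1 : IsKEdgeConnected H (k + 1)) :
    genEdgeCoverNumber Gᶜ {v : V | G.degree v = k} ≤ (H.edgeSet \ G.edgeSet).ncard := by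
  classical
  have : Nontrivial V := Fintype.one_lt_card_iff_nontrivial.1 hn
  rw [Set.ncard_eq_toFinset_card']
  refine genEdgeCoverNumber_le_card _ _ _
    (by simpa using edgeSet_sdiff_subset_edgeSet_compl G H) ?_
  rintro v (hv : G.degree v = k)
  have hdeg : G.degree v < H.degree v := hv ▸ hk1.isEdgeConnected.le_degree
  obtain ⟨u, hHvu, hGvu⟩ := exists_adj_not_adj_of_degree_lt hdeg
  exact ⟨s(v, u), by simpa using ⟨hHvu, hGvu⟩, Sym2.mem_mk_left _ _⟩

/-- Lower bound for `(k+1)`-edge connectivity augmentation of a `k`-edge-connected cograph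
`G` (on at least two vertices): if `H ⊇ G` is `(k+1)`-edge-connected, then the number of
added edges is at least `ρ(Ḡ[X])`, where `X` is the set of vertices of degree exactly `k`
in `G`. -/
theorem stmt_18 [Fintype V] (G : SimpleGraph V) [DecidableRel G.Adj]
    (hP4 : IsP4Free G) (hn : 2 ≤ Fintype.card V) (k : ℕ)
    (hkG : IsKEdgeConnected G k)
    (H : SimpleGraph V) (hGH : G ≤ H) (hk1 : IsKEdgeConnected H (k + 1)) :
    genEdgeCoverNumber Gᶜ {v : V | G.degree v = k} ≤ (H.edgeSet \ G.edgeSet).ncard :=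
  stmt_18_general G hn k H hk1
end
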